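/- arXiv:2302.01557 — 8 statements merged into one kernel-verified Lean document; each statement's English description precedes it below -/
import Mathlib

section
/- Let q be a prime power and a, b ∈ F_{q^2} with a^{q+1} + b^q + b ≠ 0. Let L_{a,b,x} = {x ∈ F_{q^2} : ∃ y ∈ F_{q^2}, x^{q+1} = y^q + y and y = a x + b} be the set of x-coordinates of the line L_{a,b}. Then the monic polynomial ∏_{γ ∈ L_{a,b,x}} (X - γ) equals (X - a^q)^{q+1} - (a^{q+1} + b^q + b) in F_{q^2}[X]. -/
open Polynomial

/-- Let `q` be a prime power and `a, b ∈ F_{q^2}` with `a^{q+1} + b^q + b ≠ 0`.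
Let `L_{a,b,x}` be the set of `x`-coordinates of the line `L_{a,b}` of the Hermitian curve.
Then `∏_{γ ∈ L_{a,b,x}} (X - γ) = (X - a^q)^{q+1} - (a^{q+1} + b^q + b)` in `F_{q^2}[X]`. -/
theorem hermitian_line_vanishing_poly (q : ℕ) (hq : IsPrimePow q)
    (F : Type*) [Field F] [Fintype F] [DecidableEq F] (hF : Fintype.card F = q ^ 2)
    (a b : F) (hab : a ^ (q + 1) + b ^ q + b ≠ 0) :
    ∏ x ∈ Finset.univ.filter
        (fun x : F => ∃ y : F, x ^ (q + 1) = y ^ q + y ∧ y = a * x + b),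
      (X - C x)
      = (X - C (a ^ q)) ^ (q + 1) - C (a ^ (q + 1) + b ^ q + b) := by
  classical
  have hq2 : 2 ≤ q := hq.two_le
  set c : F := a ^ (q + 1) + b ^ q + b with hc
  -- characteristic facts
  have hchar : CharP F (ringChar F) := ringChar.charP F
  obtain ⟨n, hpprime, hcardF⟩ := FiniteField.card F (ringChar F)
  haveI : Fact (ringChar F).Prime := ⟨hpprime⟩
  have hqdvd : q ∣ (ringChar F) ^ (n : ℕ) := by
    rw [← hcardF, hF]; exact dvd_pow_self q two_ne_zero
  obtain ⟨k, -, hqk⟩ := (Nat.dvd_prime_pow hpprime).mp hqdvd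
  have hadd : ∀ u v : F, (u + v) ^ q = u ^ q + v ^ q := by
    intro u v; rw [hqk]; exact add_pow_char_pow (p := ringChar F) (x := u) (y := v) (n := k)
  have hsub : ∀ u v : F, (u - v) ^ q = u ^ q - v ^ q := by
    intro u v; rw [hqk]; exact sub_pow_char_pow (p := ringChar F) (x := u) (y := v) (n := k)
  have hpowcard : ∀ u : F, u ^ q ^ 2 = u := by
    intro u; rw [← hF]; exact FiniteField.pow_card u
  have hqq : ∀ u : F, (u ^ q) ^ q = u := by
    intro u; rw [← pow_mul, ← pow_two]; exact hpowcard u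
  -- c is in F_q
  have hcq : c ^ q = c := by
    have h1 : (a ^ (q + 1)) ^ q = a ^ (q + 1) := by
      rw [← pow_mul, show (q + 1) * q = q ^ 2 + q by ring, pow_add, hpowcard,
        ← pow_succ']
    rw [hc, hadd, hadd, h1, hqq]
    ring
  -- set up units and cyclic group
  have hcne : c ≠ 0 := hab
  have hcard_units : Fintype.card Fˣ = q ^ 2 - 1 := by
    rw [Fintype.card_units, hF]
  obtain ⟨g, hg⟩ := IsCyclic.exists_generator (α := Fˣ)
  have horder : orderOf g = q ^ 2 - 1 := by
    rw [orderOf_eq_card_of_forall_mem_zpowers hg, Nat.card_eq_fintype_card, hcard_units]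
  have hfac : q ^ 2 - 1 = (q + 1) * (q - 1) := by
    have h1 : 1 ≤ q := by omega
    have h2 : 1 ≤ q ^ 2 := Nat.one_le_pow _ _ (by omega)
    zify [h1, h2]; ring
  set u : Fˣ := Units.mk0 c hcne with hu
  have huq : u ^ (q - 1) = 1 := by
    have h1 : c ^ (q - 1) * c = 1 * c := by
      rw [one_mul, ← pow_succ, show q - 1 + 1 = q by omega, hcq]
    have h2 : c ^ (q - 1) = 1 := mul_right_cancel₀ hcne h1
    ext
    simpa [hu] using h2
  obtain ⟨kk, hkk⟩ : ∃ kk : ℕ, g ^ kk = u := by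
    have := mem_powers_iff_mem_zpowers.mpr (hg u)
    exact this.imp fun _ h => h
  have hdvd : (q + 1) * (q - 1) ∣ kk * (q - 1) := by
    rw [← hfac, ← horder]
    apply orderOf_dvd_of_pow_eq_one
    rw [pow_mul, hkk, huq]
  have hq1 : (q + 1) ∣ kk :=
    (Nat.mul_dvd_mul_iff_right (by omega : 0 < q - 1)).mp hdvd
  obtain ⟨m, hm⟩ := hq1
  have hα : ((g ^ m : Fˣ) : F) ^ (q + 1) = c := by
    have : (g ^ m) ^ (q + 1) = u := by rw [← pow_mul, mul_comm, ← hm, hkk]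
    calc ((g ^ m : Fˣ) : F) ^ (q + 1) = (((g ^ m) ^ (q + 1) : Fˣ) : F) := by
          push_cast; ring
      _ = c := by rw [this]; rfl
  have hαne : ((g ^ m : Fˣ) : F) ≠ 0 := Units.ne_zero _
  -- primitive (q+1)-th root of unity
  set z : Fˣ := g ^ (q - 1) with hz
  have hordz : orderOf z = q + 1 := by
    rw [hz, orderOf_pow_of_dvd (by omega : q - 1 ≠ 0) (by rw [horder, hfac]; exact dvd_mul_left _ _),
      horder, hfac, Nat.mul_div_cancel _ (by omega : 0 < q - 1)]
  have hζ : IsPrimitiveRoot ((z : Fˣ) : F) (q + 1) := by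
    have h := IsPrimitiveRoot.orderOf z
    rw [hordz] at h
    exact IsPrimitiveRoot.coe_units_iff.mpr h
  -- roots of X^(q+1) - C c
  have hcroots : Multiset.card (nthRoots (q + 1) c) = q + 1 := by
    rw [hζ.card_nthRoots, if_pos ⟨_, hα⟩]
  have hnodup : (nthRoots (q + 1) c).Nodup := by
    rw [hζ.nthRoots_eq hα]
    refine Multiset.Nodup.map_on ?_ (Multiset.nodup_range _)
    intro x hx y hy hxy
    exact hζ.injOn_pow_mul hαne (by simpa using Multiset.mem_range.mp hx)
      (by simpa using Multiset.mem_range.mp hy) hxy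
  set Q : F[X] := X ^ (q + 1) - C c with hQ
  have hQmonic : Q.Monic := monic_X_pow_sub_C c (by omega)
  have hQroots : Q.roots = nthRoots (q + 1) c := rfl
  have hQprod : Q = (Q.roots.map fun t => X - C t).prod :=
    (prod_multiset_X_sub_C_of_monic_of_roots_card_eq hQmonic
      (by rw [hQroots, hcroots, hQ, natDegree_X_pow_sub_C])).symm
  -- key pointwise equivalence
  have hexp : ∀ x : F, (x - a ^ q) ^ (q + 1) = (x ^ q - a) * (x - a ^ q) := by
    intro x
    rw [pow_succ, hsub, hqq]
  have hkey : ∀ x : F,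
      (∃ y : F, x ^ (q + 1) = y ^ q + y ∧ y = a * x + b) ↔ (x - a ^ q) ^ (q + 1) = c := by
    intro x
    rw [hexp x, hc]
    constructor
    · rintro ⟨y, h1, rfl⟩
      rw [hadd, mul_pow, pow_succ] at h1
      rw [pow_succ]
      linear_combination h1
    · intro h
      refine ⟨a * x + b, ?_, rfl⟩
      rw [pow_succ] at h
      rw [hadd, mul_pow, pow_succ]
      linear_combination h
  -- the filter set as shifted roots
  have hmem : ∀ x : F, (x - a ^ q) ^ (q + 1) = c ↔ x ∈ (nthRoots (q + 1) c).map (· + a ^ q) := by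
    intro x
    rw [Multiset.mem_map]
    constructor
    · intro h
      exact ⟨x - a ^ q, (mem_nthRoots (by omega)).mpr h, by ring⟩
    · rintro ⟨t, ht, rfl⟩
      simpa using (mem_nthRoots (by omega : 0 < q + 1)).mp ht
  have hSval : (Finset.univ.filter
      (fun x : F => ∃ y : F, x ^ (q + 1) = y ^ q + y ∧ y = a * x + b)).val
      = (nthRoots (q + 1) c).map (· + a ^ q) := by
    refine Multiset.Nodup.ext (Finset.nodup _) (hnodup.map fun s t hst => by
      simpa using hst) |>.mpr ?_
    intro x
    rw [← Finset.mem_def, Finset.mem_filter]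
    simp only [Finset.mem_univ, true_and]
    rw [hkey x, hmem x]
  -- assemble
  calc ∏ x ∈ Finset.univ.filter
        (fun x : F => ∃ y : F, x ^ (q + 1) = y ^ q + y ∧ y = a * x + b), (X - C x)
      = (((nthRoots (q + 1) c).map (· + a ^ q)).map fun x => X - C x).prod := by
        rw [Finset.prod_eq_multiset_prod, hSval]
    _ = ((nthRoots (q + 1) c).map fun t => X - C (t + a ^ q)).prod := by
        rw [Multiset.map_map]; rfl
    _ = ((Q.roots.map fun t => X - C t).map fun p => p.comp (X - C (a ^ q))).prod := by
        rw [hQroots, Multiset.map_map]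
        congr 1
        apply Multiset.map_congr rfl
        intro t _
        simp only [Function.comp_apply, sub_comp, X_comp, C_comp, C_add]
        ring
    _ = Q.comp (X - C (a ^ q)) := by
        rw [← multiset_prod_comp, ← hQprod]
    _ = (X - C (a ^ q)) ^ (q + 1) - C c := by
        rw [hQ]; simp [sub_comp, pow_comp]
end

section
/- Let q be a prime power and a, b ∈ F_{q^2}. The set L_{a,b} = {(x,y) ∈ F_{q^2}^2 : x^{q+1} = y^q + y and y = a x + b} has exactly q+1 elements if and only if a^{q+1} + b^q + b ≠ 0; moreover if a^{q+1} + b^q + b = 0 then L_{a,b} has exactly one element. -/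
/-- Let `q` be a prime power and `a, b ∈ F_{q^2}`. The set
`L_{a,b} = {(x,y) : x^{q+1} = y^q + y ∧ y = a*x + b}` has exactly `q+1` elements if and only if
`a^{q+1} + b^q + b ≠ 0`; moreover if `a^{q+1} + b^q + b = 0` then `L_{a,b}` has exactly one
element. -/
theorem hermitian_line_card (q : ℕ) (hq : IsPrimePow q)
    (F : Type*) [Field F] [Fintype F] (hF : Fintype.card F = q ^ 2) (a b : F) :
    ({p : F × F | p.1 ^ (q + 1) = p.2 ^ q + p.2 ∧ p.2 = a * p.1 + b}.ncard = q + 1 ↔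
        a ^ (q + 1) + b ^ q + b ≠ 0) ∧
      (a ^ (q + 1) + b ^ q + b = 0 →
        {p : F × F | p.1 ^ (q + 1) = p.2 ^ q + p.2 ∧ p.2 = a * p.1 + b}.ncard = 1) := by
  classical
  have hq2 : 2 ≤ q := hq.two_le
  set c : F := a ^ (q + 1) + b ^ q + b with hc
  obtain ⟨p, k, hp, hk, hpk⟩ := hq
  have hp' : p.Prime := Nat.prime_iff.mpr hp
  haveI : Fact p.Prime := ⟨hp'⟩
  -- characteristic of F is p
  haveI hcharp : CharP F p := by
    have hrprime : (ringChar F).Prime := CharP.char_is_prime F (ringChar F)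
    obtain ⟨n, -, hn2⟩ := FiniteField.card F (ringChar F)
    have hdvd : ringChar F ∣ p ^ (k * 2) := by
      have h1 : ringChar F ∣ Fintype.card F :=
        hn2 ▸ dvd_pow_self _ n.2.ne'
      rwa [hF, ← hpk, ← pow_mul] at h1
    have hr : ringChar F = p :=
      (Nat.prime_dvd_prime_iff_eq hrprime hp').mp (hrprime.dvd_of_dvd_pow hdvd)
    exact hr ▸ ringChar.charP F
  -- Frobenius is additive
  have frob : ∀ x y : F, (x + y) ^ q = x ^ q + y ^ q := by
    intro x y
    have h := add_pow_char_pow x y p k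
    rwa [hpk] at h
  have frobs : ∀ x y : F, (x - y) ^ q = x ^ q - y ^ q := by
    intro x y
    have h := sub_pow_char_pow x y k (p := p)
    rwa [hpk] at h
  -- x^(q^2) = x
  have powq2 : ∀ x : F, (x ^ q) ^ q = x := by
    intro x
    rw [← pow_mul]
    have h : x ^ Fintype.card F = x := FiniteField.pow_card x
    rwa [hF, sq] at h
  -- c is fixed by Frobenius
  have hcq : c ^ q = c := by
    have h1 : (a ^ (q + 1)) ^ q = a ^ (q + 1) := by
      rw [← pow_mul]
      have h : (q + 1) * q = q * q + q := by ring
      rw [h, pow_add, pow_mul, powq2 a, pow_add, pow_one]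
      exact mul_comm a _
    calc c ^ q = (a ^ (q + 1)) ^ q + (b ^ q) ^ q + b ^ q := by rw [hc, frob, frob]
      _ = a ^ (q + 1) + b + b ^ q := by rw [h1, powq2]
      _ = c := by rw [hc]; ring
  -- pointwise reduction
  have key : ∀ x : F, (x ^ (q + 1) = (a * x + b) ^ q + (a * x + b)) ↔
      ((x - a ^ q) ^ (q + 1) = c) := by
    intro x
    have h1 : (a * x + b) ^ q = a ^ q * x ^ q + b ^ q := by rw [frob, mul_pow]
    have h2 : (x - a ^ q) ^ (q + 1) = (x ^ q - a) * (x - a ^ q) := by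
      rw [pow_succ]
      congr 1
      rw [frobs, powq2 a]
    rw [h1, h2, hc, pow_succ, pow_succ]
    constructor <;> intro h <;> linear_combination h
  -- counting when c ≠ 0
  have main : ∀ C : F, C ≠ 0 → C ^ q = C → {u : F | u ^ (q + 1) = C}.ncard = q + 1 := by
    intro C hC0 hCq
    have hq1 : q ^ 2 - 1 = (q + 1) * (q - 1) := by
      obtain ⟨r, rfl⟩ : ∃ r, q = r + 1 := ⟨q - 1, by omega⟩
      have h : (r + 1) ^ 2 = (r + 1 + 1) * (r + 1 - 1) + 1 := by
        simp only [Nat.add_sub_cancel]; ring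
      exact Nat.sub_eq_of_eq_add h
    have hcardu : Fintype.card Fˣ = (q + 1) * (q - 1) := by
      rw [Fintype.card_units, hF, hq1]
    obtain ⟨g, hg⟩ := IsCyclic.exists_generator (α := Fˣ)
    have hog : orderOf g = (q + 1) * (q - 1) := by
      rw [orderOf_eq_card_of_forall_mem_zpowers hg, Nat.card_eq_fintype_card, hcardu]
    have hoζ : orderOf (g ^ (q - 1)) = q + 1 := by
      rw [orderOf_pow, hog]
      have hgcd : Nat.gcd ((q + 1) * (q - 1)) (q - 1) = q - 1 :=
        Nat.gcd_eq_right ⟨q + 1, by ring⟩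
      rw [hgcd, Nat.mul_div_cancel _ (by omega : 0 < q - 1)]
    have hζu : IsPrimitiveRoot (g ^ (q - 1)) (q + 1) :=
      hoζ ▸ IsPrimitiveRoot.orderOf (g ^ (q - 1))
    have hζ : IsPrimitiveRoot ((g ^ (q - 1) : Fˣ) : F) (q + 1) :=
      IsPrimitiveRoot.coe_units_iff.mpr hζu
    -- existence of α with α^(q+1) = C
    have hCq1 : C ^ (q - 1) = 1 := by
      have h : C ^ (q - 1) * C = 1 * C := by
        rw [one_mul, ← pow_succ]
        have h2 : q - 1 + 1 = q := by omega
        rw [h2, hCq]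
      exact mul_right_cancel₀ hC0 h
    set Cu : Fˣ := Units.mk0 C hC0 with hCudef
    have hCu1 : Cu ^ (q - 1) = 1 := by
      ext
      rw [Units.val_pow_eq_pow_val]
      simpa [hCudef] using hCq1
    obtain ⟨m, hm⟩ := mem_powers_iff_mem_zpowers.mpr (hg Cu)
    replace hm : g ^ m = Cu := hm
    have hdvd : (q + 1) ∣ m := by
      have h1 : g ^ (m * (q - 1)) = 1 := by rw [pow_mul, hm, hCu1]
      have h2 : orderOf g ∣ m * (q - 1) := orderOf_dvd_of_pow_eq_one h1
      rw [hog] at h2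
      exact (Nat.mul_dvd_mul_iff_right (by omega : 0 < q - 1)).mp h2
    obtain ⟨t, ht⟩ := hdvd
    set α : F := ((g ^ t : Fˣ) : F) with hαdef
    have hα0 : α ≠ 0 := Units.ne_zero _
    have hα : α ^ (q + 1) = C := by
      have h1 : (g ^ t) ^ (q + 1) = Cu := by rw [← pow_mul, mul_comm, ← ht, hm]
      calc α ^ (q + 1) = (((g ^ t) ^ (q + 1) : Fˣ) : F) := by
            rw [Units.val_pow_eq_pow_val]
        _ = C := by rw [h1]; rfl
    -- the set of solutions is a coset of the (q+1)-th roots of unity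
    have hV : {v : F | v ^ (q + 1) = 1} = ↑(Polynomial.nthRootsFinset (q + 1) (1 : F)) := by
      ext v
      simp [Polynomial.mem_nthRootsFinset (by omega : 0 < q + 1)]
    have hU : {u : F | u ^ (q + 1) = C} = (fun v => α * v) '' {v : F | v ^ (q + 1) = 1} := by
      ext u
      simp only [Set.mem_image, Set.mem_setOf_eq]
      constructor
      · intro h
        refine ⟨α⁻¹ * u, ?_, by rw [← mul_assoc, mul_inv_cancel₀ hα0, one_mul]⟩
        rw [mul_pow, h, inv_pow, hα]
        exact inv_mul_cancel₀ hC0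
      · rintro ⟨v, hv, rfl⟩
        rw [mul_pow, hv, mul_one, hα]
    rw [hU, Set.ncard_image_of_injective _ (mul_right_injective₀ hα0), hV,
      Set.ncard_coe_finset, hζ.card_nthRootsFinset]
  -- the solution set as an image
  have hinj : Function.Injective (fun u : F => (u + a ^ q, a * (u + a ^ q) + b)) := by
    intro u v h
    simpa using congrArg Prod.fst h
  have hS : {p : F × F | p.1 ^ (q + 1) = p.2 ^ q + p.2 ∧ p.2 = a * p.1 + b} =
      (fun u : F => (u + a ^ q, a * (u + a ^ q) + b)) '' {u : F | u ^ (q + 1) = c} := by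
    ext ⟨x, y⟩
    simp only [Set.mem_setOf_eq, Set.mem_image, Prod.mk.injEq]
    constructor
    · rintro ⟨h1, rfl⟩
      exact ⟨x - a ^ q, (key x).mp h1, by ring, by ring⟩
    · rintro ⟨u, hu, rfl, rfl⟩
      refine ⟨?_, rfl⟩
      exact (key (u + a ^ q)).mpr (by rwa [add_sub_cancel_right])
  have hcard : {p : F × F | p.1 ^ (q + 1) = p.2 ^ q + p.2 ∧ p.2 = a * p.1 + b}.ncard =
      {u : F | u ^ (q + 1) = c}.ncard := by
    rw [hS, Set.ncard_image_of_injective _ hinj]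
  have hzero : c = 0 → {u : F | u ^ (q + 1) = c}.ncard = 1 := by
    intro hc0
    have h : {u : F | u ^ (q + 1) = c} = {0} := by
      ext u
      simp [hc0, pow_eq_zero_iff (by omega : q + 1 ≠ 0)]
    rw [h, Set.ncard_singleton]
  refine ⟨⟨fun hn hc0 => ?_, fun hc0 => ?_⟩, fun hc0 => ?_⟩
  · rw [hcard, hzero hc0] at hn
    omega
  · rw [hcard]
    exact main c hc0 hcq
  · rw [hcard]
    exact hzero hc0
end

section
/- Let q = 2^e with e ≥ 1 and let F_{q^2} be the field with q^2 elements. Let r be a natural number with 0 < 2^r < q, let k be an odd natural number and j a natural number with k < q/2^r and j < q/2^r. Then for every a ∈ F_{q^2} and every γ ∈ F_{q^2} with γ ≠ 0, the remainder of T^{k·2^r·q + j·2^r} upon division by the polynomial P_{a,γ} = (T - a^q)^{q+1} - γ in F_{q^2}[T] has degree at most q + 1 - 2^r. -/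
/-!
Put `Y = X - a^q`. In characteristic 2 the Frobenius gives `X^(2^r q) = Y^(2^r q) + const` and
`X^(2^r) = Y^(2^r) + const`, so `X^(k 2^r q + j 2^r)` is a linear combination of the powers
`Y^(2^r (q u + v))` with `u ≤ k`, `v ≤ j`. Modulo `P = Y^(q+1) - γ` each `Y^m` reduces to a
scalar multiple of `Y^(m % (q+1))`, and since `q ≡ -1 [MOD q+1]` the exponent `2^r (q u + v)`
reduces to `2^r (v - u)` or `q + 1 - 2^r (u - v)`; both are at most `q + 1 - 2^r` because
`2^r (u + 1)` and `2^r (v + 1)` are at most `q`.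
-/

open Polynomial Finset

section Remainder

variable {R : Type*} [CommRing R] (b γ : R) {n : ℕ}

lemma monic_X_sub_C_pow_sub_C (hn : n ≠ 0) : ((X - C b) ^ n - C γ).Monic := by
  simpa using (monic_X_pow_sub_C γ hn).comp_X_sub_C b

lemma degree_C_mul_X_sub_C_pow_le (a : R) (s : ℕ) :
    (C a * (X - C b) ^ s).degree ≤ (s : WithBot ℕ) :=
  degree_le_of_natDegree_le (by compute_degree)

lemma X_sub_C_pow_modByMonic [Nontrivial R] (hn : n ≠ 0) (m : ℕ) :
    (X - C b) ^ m %ₘ ((X - C b) ^ n - C γ) = C (γ ^ (m / n)) * (X - C b) ^ (m % n) := by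
  have hmonic := monic_X_sub_C_pow_sub_C b γ hn
  rw [modByMonic_eq_of_dvd_sub hmonic, (modByMonic_eq_self_iff hmonic).mpr]
  · calc (C (γ ^ (m / n)) * (X - C b) ^ (m % n)).degree ≤ ((m % n : ℕ) : WithBot ℕ) :=
          degree_C_mul_X_sub_C_pow_le ..
      _ < n := by exact_mod_cast Nat.mod_lt m (Nat.pos_of_ne_zero hn)
      _ = ((X - C b) ^ n - C γ).degree := by
          rw [degree_eq_natDegree hmonic.ne_zero]
          simp [(monic_X_sub_C b).natDegree_pow]
  · have hsplit : (X - C b) ^ m = ((X - C b) ^ n) ^ (m / n) * (X - C b) ^ (m % n) := by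
      rw [← pow_mul, ← pow_add, Nat.div_add_mod]
    rw [hsplit, C_pow, ← sub_mul]
    exact (sub_dvd_pow_sub_pow _ _ _).mul_right _

lemma degree_sum_C_mul_X_sub_C_pow_modByMonic_le [Nontrivial R] (hn : n ≠ 0) {ι : Type*}
    (s : Finset ι) (c : ι → R) (m : ι → ℕ) {D : ℕ} (hD : ∀ i ∈ s, m i % n ≤ D) :
    ((∑ i ∈ s, C (c i) * (X - C b) ^ m i) %ₘ ((X - C b) ^ n - C γ)).degree
      ≤ (D : WithBot ℕ) := by
  rw [← mem_degreeLE, ← modByMonicHom_apply, map_sum]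
  refine Submodule.sum_mem _ fun i hi => ?_
  rw [← smul_eq_C_mul, map_smul, modByMonicHom_apply, X_sub_C_pow_modByMonic b γ hn]
  exact Submodule.smul_mem _ _ <| mem_degreeLE.mpr <|
    (degree_C_mul_X_sub_C_pow_le ..).trans (by exact_mod_cast hD i hi)

end Remainder

section Frobenius

variable {R : Type*} [CommRing R] (p : ℕ) [ExpChar R p] (b : R)

lemma X_pow_expChar_pow (t : ℕ) : (X : R[X]) ^ p ^ t = (X - C b) ^ p ^ t + C (b ^ p ^ t) := by
  rw [C_pow, ← add_pow_expChar_pow, sub_add_cancel]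

lemma exists_X_pow_eq_sum_C_mul_X_sub_C_pow (s t k j : ℕ) :
    ∃ c : ℕ × ℕ → R, (X : R[X]) ^ (k * p ^ s + j * p ^ t) =
      ∑ x ∈ range (k + 1) ×ˢ range (j + 1), C (c x) * (X - C b) ^ (p ^ s * x.1 + p ^ t * x.2) := by
  refine ⟨fun x => (b ^ p ^ s) ^ (k - x.1) * k.choose x.1 *
    ((b ^ p ^ t) ^ (j - x.2) * j.choose x.2), ?_⟩
  rw [pow_add, mul_comm k, mul_comm j, pow_mul, pow_mul, X_pow_expChar_pow p b,
    X_pow_expChar_pow p b, add_pow, add_pow, sum_mul_sum, sum_product]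
  refine sum_congr rfl fun u _ => sum_congr rfl fun v _ => ?_
  simp only [C_mul, C_pow, map_natCast, pow_add, pow_mul]
  ring

end Frobenius

/-- Modulo `q + 1` we have `q ≡ -1`, so the residue is `A (v - u)` if `u ≤ v` and
`q + 1 - A (u - v)` otherwise. -/
lemma mul_mul_add_mul_mod_succ_add_le {A q u v : ℕ} (hA : 0 < A) (hu : (u + 1) * A ≤ q)
    (hv : (v + 1) * A ≤ q) : (A * q * u + A * v) % (q + 1) + A ≤ q + 1 := by
  rcases le_or_gt u v with huv | hvu
  · obtain ⟨w, rfl⟩ := Nat.exists_eq_add_of_le huv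
    have hsplit : A * q * u + A * (u + w) = (q + 1) * (A * u) + A * w := by ring
    rw [hsplit, Nat.mul_add_mod]
    have := Nat.mod_le (A * w) (q + 1)
    nlinarith
  · obtain ⟨w, rfl⟩ := Nat.exists_eq_add_of_lt hvu
    have h1 : 1 ≤ A * (v + w + 1) := Nat.one_le_iff_ne_zero.mpr (by positivity)
    have h2 : A * (w + 1) ≤ q + 1 := by nlinarith
    have hsplit : A * q * (v + w + 1) + A * v
        = (q + 1) * (A * (v + w + 1) - 1) + (q + 1 - A * (w + 1)) := by
      zify [h1, h2]
      ring
    rw [hsplit, Nat.mul_add_mod]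
    have := Nat.mod_le (q + 1 - A * (w + 1)) (q + 1)
    have : A ≤ A * (w + 1) := Nat.le_mul_of_pos_right A w.succ_pos
    omega

theorem degree_pow_modByMonic_le_general (e : ℕ) (q : ℕ) (hq : q = 2 ^ e)
    (F : Type*) [Field F] [Fintype F] (hF : Fintype.card F = q ^ 2)
    (r : ℕ) (k j : ℕ) (hkq : k < q / 2 ^ r) (hjq : j < q / 2 ^ r) (a γ : F) :
    ((X ^ (k * 2 ^ r * q + j * 2 ^ r) : F[X]) %ₘ ((X - C (a ^ q)) ^ (q + 1) - C γ)).degree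
      ≤ (q + 1 - 2 ^ r : ℕ) := by
  have : CharP F 2 := charP_of_card_eq_prime_pow (f := e * 2) (by rw [hF, hq, pow_mul])
  have hA : 0 < 2 ^ r := by positivity
  obtain ⟨c, hc⟩ := exists_X_pow_eq_sum_C_mul_X_sub_C_pow 2 (a ^ q) (r + e) r k j
  rw [show k * 2 ^ r * q + j * 2 ^ r = k * 2 ^ (r + e) + j * 2 ^ r by rw [hq, pow_add]; ring, hc]
  refine degree_sum_C_mul_X_sub_C_pow_modByMonic_le _ _ q.add_one_ne_zero _ _ _ fun x hx => ?_
  rw [mem_product, mem_range, mem_range] at hx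
  have hu : (x.1 + 1) * 2 ^ r ≤ q := (Nat.le_div_iff_mul_le hA).mp (by omega)
  have hv : (x.2 + 1) * 2 ^ r ≤ q := (Nat.le_div_iff_mul_le hA).mp (by omega)
  have := mul_mul_add_mul_mod_succ_add_le hA hu hv
  rw [pow_add, ← hq]
  omega

/-- Let `q = 2^e` with `e ≥ 1` and let `F_{q^2}` be the field with `q^2` elements. Let `r` be a
natural number with `0 < 2^r < q`, let `k` be an odd natural number and `j` a natural number with
`k < q/2^r` and `j < q/2^r`. Then for every `a ∈ F_{q^2}` and every `γ ∈ F_{q^2}` with `γ ≠ 0`,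
the remainder of `T^{k·2^r·q + j·2^r}` upon division by `P_{a,γ} = (T - a^q)^{q+1} - γ` in
`F_{q^2}[T]` has degree at most `q + 1 - 2^r`. -/
theorem degree_pow_modByMonic_le (e : ℕ) (he : 1 ≤ e) (q : ℕ) (hq : q = 2 ^ e)
    (F : Type*) [Field F] [Fintype F] (hF : Fintype.card F = q ^ 2)
    (r : ℕ) (hr : 0 < 2 ^ r) (hrq : 2 ^ r < q)
    (k j : ℕ) (hk : Odd k) (hkq : k < q / 2 ^ r) (hjq : j < q / 2 ^ r)
    (a γ : F) (hγ : γ ≠ 0) :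
    ((X ^ (k * 2 ^ r * q + j * 2 ^ r) : F[X]) %ₘ ((X - C (a ^ q)) ^ (q + 1) - C γ)).degree
      ≤ (q + 1 - 2 ^ r : ℕ) :=
  degree_pow_modByMonic_le_general e q hq F hF r k j hkq hjq a γ
end

section
/- Let q = 2^e with e ≥ 1 and let F_{q^2} be the field with q^2 elements. Let r be a natural number with 0 < 2^r < q. Let i = i₁·q + i₂·2^r + i₃ where i₁ = 2^r·k₁ with k₁ odd, 0 ≤ i₁ < q, 0 ≤ i₂ < q/2^r, and 0 ≤ i₃ < 2^r; let j = j₂·2^r + j₃ where 0 ≤ j < q, 0 ≤ j₂ < q/2^r, and 0 ≤ j₃ < 2^r. Assume i₂·2^r + i₃ + j₂·2^r + j₃ < q and that 2^r - 1 - i₃ does not lie in the 2-shadow of j₃. Then for all a, b ∈ F_{q^2} with γ := a^{q+1} + b^q + b ≠ 0, the remainder of T^i·(aT + b)^j upon division by (T - a^q)^{q+1} - γ in F_{q^2}[T] has degree strictly less than q. -/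
open Polynomial Finset

section Helpers

lemma testBit_two_pow_sub_one_sub {n x : ℕ} (hx : x < 2 ^ n) (s : ℕ) :
    (2 ^ n - 1 - x).testBit s = (decide (s < n) && ! x.testBit s) := by
  induction n generalizing x s with
  | zero => interval_cases x; simp
  | succ n ih =>
    have h2 : 2 ^ (n + 1) = 2 * 2 ^ n := by ring
    cases s with
    | zero =>
      by_cases hx2 : x % 2 = 1
      · have h : (2 ^ (n+1) - 1 - x) % 2 = 0 := by omega
        simp [hx2, h]
      · have h : (2 ^ (n+1) - 1 - x) % 2 = 1 := by omega
        simp [hx2, h]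
    | succ s =>
      rw [Nat.testBit_add_one, Nat.testBit_add_one]
      have hdiv : (2 ^ (n + 1) - 1 - x) / 2 = 2 ^ n - 1 - x / 2 := by omega
      rw [hdiv, ih (by omega)]
      simp

lemma odd_factors_of_choose {n k : ℕ} (h : n.choose k % 2 = 1) :
    (n % 2).choose (k % 2) % 2 = 1 ∧ (n / 2).choose (k / 2) % 2 = 1 := by
  have : Fact (Nat.Prime 2) := ⟨Nat.prime_two⟩
  have hm := (Choose.choose_modEq_choose_mod_mul_choose_div_nat (p := 2) (n := n) (k := k))
  unfold Nat.ModEq at hm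
  have heq : (n % 2).choose (k % 2) * ((n / 2).choose (k / 2)) % 2 = 1 := by omega
  have h2 := Nat.odd_mul.mp (Nat.odd_iff.mpr heq)
  exact ⟨Nat.odd_iff.mp h2.1, Nat.odd_iff.mp h2.2⟩

/-- If `choose n k` is odd then every bit of `k` is a bit of `n` (Lucas, p = 2). -/
lemma testBit_of_odd_choose {n k : ℕ} (h : n.choose k % 2 = 1) :
    ∀ s, k.testBit s = true → n.testBit s = true := by
  intro s
  induction s generalizing n k with
  | zero =>
    intro hk
    have h0 := (odd_factors_of_choose h).1
    simp only [Nat.testBit_zero, decide_eq_true_eq] at hk ⊢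
    have hn2 : n % 2 = 0 ∨ n % 2 = 1 := by omega
    rcases hn2 with h2 | h2
    · rw [h2, hk] at h0; simp [Nat.choose] at h0
    · exact h2
  | succ s ih =>
    intro hk
    have h1 := (odd_factors_of_choose h).2
    rw [Nat.testBit_add_one] at hk ⊢
    exact ih h1 hk

lemma key_choose_even {r i₂ i₃ j₂ j₃ k₁ p v w : ℕ} (hi₃ : i₃ < 2 ^ r) (hj₃ : j₃ < 2 ^ r)
    (hshadow : ¬ ((2 ^ r - 1 - i₃) ||| j₃ = j₃))
    (hsum : p + v + w + 1 = 2 ^ r * k₁) :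
    (Nat.choose (2 ^ r * k₁) p * Nat.choose (i₂ * 2 ^ r + i₃) v
      * Nat.choose (j₂ * 2 ^ r + j₃) w) % 2 = 0 := by
  by_contra hodd
  have hone : (Nat.choose (2 ^ r * k₁) p * Nat.choose (i₂ * 2 ^ r + i₃) v
      * Nat.choose (j₂ * 2 ^ r + j₃) w) % 2 = 1 := by omega
  have h3 := Nat.odd_mul.mp (Nat.odd_iff.mpr hone)
  have h4 := Nat.odd_mul.mp h3.1
  have hcp := testBit_of_odd_choose (Nat.odd_iff.mp h4.1)
  have hcv := testBit_of_odd_choose (Nat.odd_iff.mp h4.2)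
  have hcw := testBit_of_odd_choose (Nat.odd_iff.mp h3.2)
  have hP : 0 < 2 ^ r := Nat.pow_pos (by norm_num)
  have hpbit : ∀ s, s < r → p.testBit s = false := by
    intro s hs
    by_contra hb
    have hb' := hcp s (by simpa using hb)
    have h0 : ((2 ^ r * k₁) % 2 ^ r).testBit s = (2 ^ r * k₁).testBit s := by
      rw [Nat.testBit_mod_two_pow]
      simp [hs, hb']
    rw [Nat.mul_mod_right] at h0
    simp [← h0] at hb'
  have hp0 : p % 2 ^ r = 0 := by
    apply Nat.eq_of_testBit_eq
    intro s
    rw [Nat.testBit_mod_two_pow, Nat.zero_testBit]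
    by_cases hs : s < r
    · simp [hs, hpbit s hs]
    · simp [hs]
  set v₃ := v % 2 ^ r with hv₃
  set w₃ := w % 2 ^ r with hw₃
  have hvlt : v₃ < 2 ^ r := Nat.mod_lt _ hP
  have hwlt : w₃ < 2 ^ r := Nat.mod_lt _ hP
  have h1 : (p + v + w + 1) % 2 ^ r = 0 := by
    rw [hsum]; exact Nat.mul_mod_right _ _
  have e1 : v₃ + w₃ + 1 ≡ p + v + w + 1 [MOD 2 ^ r] := by
    have hpz : (0:ℕ) ≡ p [MOD 2 ^ r] := by
      unfold Nat.ModEq; simpa using hp0.symm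
    have e2 : v₃ + w₃ + 1 ≡ v + w + 1 [MOD 2 ^ r] :=
      ((Nat.mod_modEq v (2 ^ r)).add (Nat.mod_modEq w (2 ^ r))).add_right 1
    have e3 := hpz.add e2
    simpa [show p + (v + w + 1) = p + v + w + 1 from by ring] using e3
  have hd : (v₃ + w₃ + 1) % 2 ^ r = 0 := by
    have e4 : (v₃ + w₃ + 1) % 2 ^ r = (p + v + w + 1) % 2 ^ r := e1
    rw [e4, h1]
  obtain ⟨c, hc⟩ := Nat.dvd_of_mod_eq_zero hd
  have hsum3 : v₃ + w₃ + 1 = 2 ^ r := by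
    rcases Nat.lt_or_ge c 2 with h | h
    · interval_cases c <;> omega
    · nlinarith
  apply hshadow
  apply Nat.eq_of_testBit_eq
  intro s
  rw [Nat.testBit_lor]
  by_cases hb : (2 ^ r - 1 - i₃).testBit s = true
  · rw [testBit_two_pow_sub_one_sub hi₃ s] at hb
    have hs : s < r := by
      by_contra hs; simp [hs] at hb
    have hib : i₃.testBit s = false := by
      rcases Bool.eq_false_or_eq_true (i₃.testBit s) with h | h
      · simp [hs, h] at hb
      · exact h
    have hvb : v₃.testBit s = false := by
      rw [hv₃, Nat.testBit_mod_two_pow]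
      by_cases hvs : v.testBit s = true
      · have h5 := hcv s hvs
        have h6 : ((i₂ * 2 ^ r + i₃) % 2 ^ r).testBit s = true := by
          rw [Nat.testBit_mod_two_pow]
          simp [hs, h5]
        rw [show i₂ * 2 ^ r + i₃ = i₃ + i₂ * 2 ^ r by ring, Nat.add_mul_mod_self_right,
          Nat.mod_eq_of_lt hi₃] at h6
        rw [h6] at hib; exact absurd hib (by simp)
      · simp at hvs; simp [hvs]
    have hw3 : w₃ = 2 ^ r - 1 - v₃ := by omega
    have hwb : w₃.testBit s = true := by
      rw [hw3, testBit_two_pow_sub_one_sub hvlt s, hvb]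
      simp [hs]
    have hwbit : w.testBit s = true := by
      rw [hw₃, Nat.testBit_mod_two_pow] at hwb
      exact (Bool.and_eq_true_iff.mp hwb).2
    have hjb : (j₂ * 2 ^ r + j₃).testBit s = true := hcw s hwbit
    have hj : j₃.testBit s = true := by
      have h5 : ((j₂ * 2 ^ r + j₃) % 2 ^ r).testBit s = true := by
        rw [Nat.testBit_mod_two_pow]; simp [hs, hjb]
      rwa [show j₂ * 2 ^ r + j₃ = j₃ + j₂ * 2 ^ r by ring, Nat.add_mul_mod_self_right,
        Nat.mod_eq_of_lt hj₃] at h5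
    simp [hj]
  · simp only [Bool.not_eq_true] at hb
    simp [hb]

variable {F : Type*} [Field F]

lemma coeff_linear_pow (c d : F) (n k : ℕ) :
    ((C c * X + C d) ^ n).coeff k = (n.choose k : F) * c ^ k * d ^ (n - k) := by
  rw [add_pow, finset_sum_coeff]
  have h : ∀ t ∈ range (n + 1),
      ((C c * X) ^ t * C d ^ (n - t) * (n.choose t : F[X])).coeff k
        = if t = k then (n.choose k : F) * c ^ k * d ^ (n - k) else 0 := by
    intro t ht
    rw [mul_pow, ← C_pow, ← C_pow, ← C_eq_natCast,
      show C (c ^ t) * X ^ t * C (d ^ (n - t)) * C ((n.choose t : F)) =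
        C ((n.choose t : F) * (c ^ t * d ^ (n - t))) * X ^ t by rw [C_mul, C_mul]; ring,
      coeff_C_mul, coeff_X_pow]
    by_cases h : t = k
    · subst h; simp [mul_assoc]
    · simp [h, Ne.symm h]
  rw [Finset.sum_congr rfl h, Finset.sum_ite_eq' (range (n + 1)) k]
  by_cases hk : k ∈ range (n + 1)
  · simp [hk]
  · simp only [hk, if_false]
    rw [Nat.choose_eq_zero_of_lt (by simpa using hk)]
    simp

lemma C_mul_modByMonic (c : F) (p q : F[X]) : (C c * p) %ₘ q = C c * (p %ₘ q) := by
  rw [← smul_eq_C_mul, ← smul_eq_C_mul, smul_modByMonic]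

lemma X_pow_modByMonic (γ : F) {n : ℕ} (hn : 0 < n) (t : ℕ) :
    (X ^ t : F[X]) %ₘ (X ^ n - C γ) = C (γ ^ (t / n)) * X ^ (t % n) := by
  have hmonic : (X ^ n - C γ).Monic := monic_X_pow_sub_C γ hn.ne'
  have hdeg : (X ^ n - C γ).degree = (n : WithBot ℕ) := degree_X_pow_sub_C hn γ
  induction t using Nat.strong_induction_on with
  | _ t ih =>
    rcases Nat.lt_or_ge t n with h | h
    · rw [Nat.div_eq_of_lt h, Nat.mod_eq_of_lt h, pow_zero, map_one, one_mul,
        (modByMonic_eq_self_iff hmonic).mpr]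
      rw [hdeg, degree_X_pow]
      exact_mod_cast h
    · have hdvd : (X ^ n - C γ) ∣ (X ^ t - C γ * X ^ (t - n)) := by
        refine ⟨X ^ (t - n), ?_⟩
        rw [sub_mul, ← pow_add]
        congr 2
        omega
      rw [modByMonic_eq_of_dvd_sub hmonic hdvd, C_mul_modByMonic,
        ih (t - n) (by omega), ← mul_assoc, ← map_mul, ← pow_succ']
      rw [Nat.div_eq_sub_div hn h, Nat.mod_eq_sub_mod h]

lemma coeff_modByMonic_eq_sum (γ : F) {n : ℕ} (hn : 0 < n) (p : F[X]) (k : ℕ) :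
    (p %ₘ (X ^ n - C γ)).coeff k
      = ∑ u ∈ p.support, if u % n = k then p.coeff u * γ ^ (u / n) else 0 := by
  conv_lhs => rw [p.as_sum_support]
  rw [← modByMonicHom_apply, map_sum, finset_sum_coeff]
  refine Finset.sum_congr rfl ?_
  intro u hu
  rw [modByMonicHom_apply, ← C_mul_X_pow_eq_monomial, C_mul_modByMonic,
    X_pow_modByMonic γ hn, ← mul_assoc, ← map_mul, coeff_C_mul, coeff_X_pow]
  by_cases h : u % n = k
  · simp [h, mul_comm]
  · simp [h, Ne.symm h]

end Helpers

/-- Lemma on good monomials: with `q = 2^e`, `i = i₁q + i₂2^r + i₃` (`i₁ = 2^r k₁`, `k₁` odd),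
`j = j₂2^r + j₃`, if `i₂2^r + i₃ + j₂2^r + j₃ < q` and `2^r - 1 - i₃` does not lie in the
2-shadow of `j₃`, then for all `a, b ∈ F_{q^2}` with `γ = a^{q+1} + b^q + b ≠ 0`, the remainder
of `T^i (aT+b)^j` modulo `(T - a^q)^{q+1} - γ` has degree strictly less than `q`. -/
theorem good_monomial_degree_lt (e : ℕ) (he : 1 ≤ e) (q : ℕ) (hq : q = 2 ^ e)
    (F : Type*) [Field F] [Fintype F] (hF : Fintype.card F = q ^ 2)
    (r : ℕ) (hr : 0 < 2 ^ r) (hrq : 2 ^ r < q)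
    (i j i₁ i₂ i₃ j₂ j₃ k₁ : ℕ)
    (hi₁ : i₁ = 2 ^ r * k₁) (hk₁ : Odd k₁) (hi₁q : i₁ < q)
    (hi₂ : i₂ < q / 2 ^ r) (hi₃ : i₃ < 2 ^ r)
    (hi : i = i₁ * q + i₂ * 2 ^ r + i₃)
    (hj : j = j₂ * 2 ^ r + j₃) (hjq : j < q) (hj₂ : j₂ < q / 2 ^ r) (hj₃ : j₃ < 2 ^ r)
    (hsum : i₂ * 2 ^ r + i₃ + j₂ * 2 ^ r + j₃ < q)
    (hshadow : ¬ ((2 ^ r - 1 - i₃) ||| j₃ = j₃))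
    (a b : F) (hγ : a ^ (q + 1) + b ^ q + b ≠ 0) :
    ((X ^ i * (C a * X + C b) ^ j : F[X]) %ₘ
        ((X - C (a ^ q)) ^ (q + 1) - C (a ^ (q + 1) + b ^ q + b))).degree
      < (q : WithBot ℕ) := by
  -- characteristic 2
  have hp2 : ringChar F = 2 := by
    obtain ⟨n, hp, hcard⟩ := FiniteField.card F (ringChar F)
    have h2e : Fintype.card F = 2 ^ (2 * e) := by
      rw [hF, hq, ← pow_mul, mul_comm]
    have hdvd : ringChar F ∣ 2 ^ (2 * e) := by
      rw [← h2e, hcard]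
      exact dvd_pow_self _ (by positivity)
    exact (Nat.prime_dvd_prime_iff_eq hp Nat.prime_two).mp (hp.dvd_of_dvd_pow hdvd)
  haveI hchar : CharP F 2 := hp2 ▸ ringChar.charP F
  haveI : Fact (Nat.Prime 2) := ⟨Nat.prime_two⟩
  have hq2 : 2 ≤ q := by
    rw [hq]
    calc 2 = 2 ^ 1 := (pow_one 2).symm
    _ ≤ 2 ^ e := Nat.pow_le_pow_right (by norm_num) he
  -- notation
  set α : F := a ^ q with hα
  set γ : F := a ^ (q + 1) + b ^ q + b with hγdef
  set β : F := a ^ (q + 1) + b with hβ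
  set m : ℕ := i₂ * 2 ^ r + i₃ with hm
  have him : i = i₁ * q + m := by rw [hi, hm]; ring
  have hmj : m + j ≤ q - 1 := by rw [hm, hj]; omega
  have hi₁pos : 1 ≤ i₁ := by
    rw [hi₁]
    calc 1 ≤ 2 ^ r := hr
    _ = 2 ^ r * 1 := (mul_one _).symm
    _ ≤ 2 ^ r * k₁ := Nat.mul_le_mul_left _ hk₁.pos
  -- the polynomials
  set N : F[X] := X ^ (q + 1) - C γ with hN
  set M : F[X] := (X - C α) ^ (q + 1) - C γ with hMdef
  have hNmonic : N.Monic := monic_X_pow_sub_C γ (by omega)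
  have hNdeg : N.degree = ((q + 1 : ℕ) : WithBot ℕ) := degree_X_pow_sub_C (by omega) γ
  have hNcomp : N.comp (X - C α) = M := by
    rw [hN, hMdef]; simp [sub_comp, pow_comp, X_comp, C_comp]
  have hMmonic : M.Monic := by
    rw [← hNcomp]; exact hNmonic.comp_X_sub_C α
  -- composing with `X - C α` preserves degrees
  have hdegcomp : ∀ p : F[X], (p.comp (X - C α)).degree = p.degree := by
    intro p
    rcases eq_or_ne p 0 with h0 | h0
    · rw [h0, zero_comp]
    · have hne : p.comp (X - C α) ≠ 0 := fun hcc => by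
        have hcp : (p.comp (X - C α)).comp (X + C α) = p := by
          rw [comp_assoc]; simp
        exact h0 (by rw [← hcp, hcc, zero_comp])
      rw [degree_eq_natDegree hne, degree_eq_natDegree h0, natDegree_comp,
        natDegree_X_sub_C, mul_one]
  set h : F[X] := (X + C α) ^ i * (C a * X + C β) ^ j with hh
  set ρ : F[X] := h %ₘ N with hρ
  have hPcomp : h.comp (X - C α) = X ^ i * (C a * X + C b) ^ j := by
    rw [hh]
    simp only [mul_comp, pow_comp, add_comp, X_comp, C_comp, sub_comp]
    have h1 : (X - C α + C α : F[X]) = X := by ring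
    have h2 : (C a * (X - C α) + C β : F[X]) = C a * X + C b := by
      rw [hβ, hα, show ((a:F) ^ (q+1)) = a * a ^ q by rw [pow_succ]; ring, C_add, C_mul]
      ring
    rw [h1, h2]
  -- step B : the remainder modulo M is ρ.comp (X - C α)
  have hsplit : h %ₘ N + N * (h /ₘ N) = h := modByMonic_add_div h N
  have hdecomp : X ^ i * (C a * X + C b) ^ j
      = ρ.comp (X - C α) + M * ((h /ₘ N).comp (X - C α)) := by
    rw [← hPcomp]
    conv_lhs => rw [← hsplit]
    rw [add_comp, mul_comp, hNcomp, hρ]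
  have hρdegN : ρ.degree < N.degree := degree_modByMonic_lt h hNmonic
  have hρ'degN : (ρ.comp (X - C α)).degree < M.degree := by
    rw [hdegcomp, ← hNcomp, hdegcomp]
    exact hρdegN
  have hmain : (X ^ i * (C a * X + C b) ^ j : F[X]) %ₘ M = ρ.comp (X - C α) := by
    have hdvd : M ∣ (X ^ i * (C a * X + C b) ^ j - ρ.comp (X - C α)) :=
      ⟨(h /ₘ N).comp (X - C α), by rw [hdecomp]; ring⟩
    rw [modByMonic_eq_of_dvd_sub hMmonic hdvd,
      (modByMonic_eq_self_iff hMmonic).mpr hρ'degN]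
  rw [hmain, hdegcomp]
  -- main computation : degree ρ < q
  -- Frobenius facts
  have hαq : α ^ q = a := by
    rw [hα, ← pow_mul, show q * q = Fintype.card F by rw [hF]; ring]
    exact FiniteField.pow_card a
  have hfrob : ((X + C α : F[X])) ^ q = X ^ q + C a := by
    have hfr := add_pow_char_pow (x := (X : F[X])) (y := C α) (p := 2) (n := e)
    rw [← hq] at hfr
    rw [hfr, ← C_pow, hαq]
  set g : F[X] := (C a * X + C γ) ^ i₁ * ((X + C α) ^ m * (C a * X + C β) ^ j) with hg
  have hgdeg : g.natDegree ≤ i₁ + (m + j) := by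
    have h1 : ((C a * X + C γ : F[X]) ^ i₁).natDegree ≤ i₁ :=
      le_trans natDegree_pow_le
        (by simpa using Nat.mul_le_mul_left i₁ (natDegree_linear_le (a := a) (b := γ)))
    have h2 : ((X + C α : F[X]) ^ m).natDegree ≤ m :=
      le_trans natDegree_pow_le (by simp [natDegree_X_add_C])
    have h3 : ((C a * X + C β : F[X]) ^ j).natDegree ≤ j :=
      le_trans natDegree_pow_le
        (by simpa using Nat.mul_le_mul_left j (natDegree_linear_le (a := a) (b := β)))
    calc g.natDegree ≤ ((C a * X + C γ : F[X]) ^ i₁).natDegree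
        + (((X + C α) ^ m * (C a * X + C β) ^ j : F[X])).natDegree := natDegree_mul_le
    _ ≤ ((C a * X + C γ : F[X]) ^ i₁).natDegree
        + (((X + C α : F[X]) ^ m).natDegree + ((C a * X + C β : F[X]) ^ j).natDegree) := by
        exact Nat.add_le_add_left natDegree_mul_le _
    _ ≤ i₁ + (m + j) := by omega
  -- the congruence
  have hA : C (γ ^ i₁) * h = (C γ * (X ^ q + C a)) ^ i₁
      * ((X + C α) ^ m * (C a * X + C β) ^ j) := by
    rw [hh, him, pow_add, pow_mul', hfrob, C_pow, mul_pow]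
    ring
  have hB : X ^ (q * i₁) * g = (X ^ q * (C a * X + C γ)) ^ i₁
      * ((X + C α) ^ m * (C a * X + C β) ^ j) := by
    rw [hg, pow_mul, mul_pow]
    ring
  have hdvdN : N ∣ C (γ ^ i₁) * h - X ^ (q * i₁) * g := by
    rw [hA, hB, ← sub_mul]
    refine Dvd.dvd.mul_right (dvd_trans ?_ (sub_dvd_pow_sub_pow _ _ i₁)) _
    refine ⟨-C a, ?_⟩
    rw [hN]
    ring
  have hmod : C (γ ^ i₁) * ρ = (X ^ (q * i₁) * g) %ₘ N := by
    rw [hρ, ← C_mul_modByMonic]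
    exact modByMonic_eq_of_dvd_sub hNmonic hdvdN
  have hcoeffq : γ ^ i₁ * ρ.coeff q = ((X ^ (q * i₁) * g) %ₘ N).coeff q := by
    rw [← hmod, coeff_C_mul]
  -- the right-hand side vanishes
  have hrhs : ((X ^ (q * i₁) * g) %ₘ N).coeff q = 0 := by
    rw [hN, coeff_modByMonic_eq_sum γ (show 0 < q + 1 by omega)]
    apply Finset.sum_eq_zero
    intro u hu
    split_ifs with hcond
    swap
    · rfl
    suffices hzero : (X ^ (q * i₁) * g).coeff u = 0 by rw [hzero, zero_mul]
    rw [X_pow_mul, coeff_mul_X_pow']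
    split_ifs with hle
    swap
    · rfl
    set u' := u - q * i₁ with hu'
    -- number theory : u' + 1 = i₁ or u' exceeds the degree of g
    have h7 : (u + 1) % (q + 1) = 0 := by
      rw [Nat.add_mod, hcond]
      simp
    have h8 : (u + 1 + i₁) % (q + 1) = i₁ := by
      rw [Nat.add_mod, h7, Nat.zero_add, Nat.mod_mod]
      exact Nat.mod_eq_of_lt (by omega)
    have h9 : u + 1 + i₁ = (u' + 1) + i₁ * (q + 1) := by
      have e1 : i₁ * (q + 1) = q * i₁ + i₁ := by ring
      omega
    have hmodu : (u' + 1) % (q + 1) = i₁ := by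
      have h10 := Nat.add_mul_mod_self_right (u' + 1) i₁ (q + 1)
      rw [← h9, h8] at h10
      exact h10.symm
    by_cases hub : g.natDegree < u'
    · exact coeff_eq_zero_of_natDegree_lt hub
    push_neg at hub
    have hdm := Nat.div_add_mod (u' + 1) (q + 1)
    have hu'i : u' + 1 = i₁ := by
      rcases Nat.eq_zero_or_pos ((u' + 1) / (q + 1)) with hzz | hzz
      · rw [hmodu, hzz, Nat.mul_zero, Nat.zero_add] at hdm
        exact hdm.symm
      · exfalso
        have h11 : (q + 1) * 1 ≤ (q + 1) * ((u' + 1) / (q + 1)) :=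
          Nat.mul_le_mul_left _ hzz
        rw [hmodu] at hdm
        omega
    -- the coefficient of g at u' vanishes
    rw [hg, coeff_mul]
    apply Finset.sum_eq_zero
    rintro ⟨p, s⟩ hps
    rw [coeff_mul, Finset.mul_sum]
    apply Finset.sum_eq_zero
    rintro ⟨v, w⟩ hvw
    simp only [Finset.HasAntidiagonal.mem_antidiagonal] at hps hvw
    rw [coeff_linear_pow, coeff_X_add_C_pow, coeff_linear_pow]
    have hkey : ((i₁.choose p * m.choose v * j.choose w : ℕ) : F) = 0 := by
      rw [CharP.cast_eq_zero_iff F 2]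
      apply Nat.dvd_of_mod_eq_zero
      rw [hi₁, hm, hj]
      exact key_choose_even hi₃ hj₃ hshadow (by rw [← hi₁]; omega)
    calc (↑(i₁.choose p) * a ^ p * γ ^ (i₁ - p))
          * (α ^ (m - v) * ↑(m.choose v) * (↑(j.choose w) * a ^ w * β ^ (j - w)))
        = ((i₁.choose p * m.choose v * j.choose w : ℕ) : F)
          * (a ^ p * γ ^ (i₁ - p) * α ^ (m - v) * a ^ w * β ^ (j - w)) := by
          push_cast
          ring
      _ = 0 := by rw [hkey, zero_mul]
  -- conclude coeff ρ q = 0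
  have hcq : ρ.coeff q = 0 := by
    have h12 := hcoeffq.trans hrhs
    rcases mul_eq_zero.mp h12 with h13 | h13
    · exact absurd h13 (pow_ne_zero _ hγ)
    · exact h13
  -- degree ρ < q
  rw [degree_lt_iff_coeff_zero]
  intro k hk
  rcases eq_or_lt_of_le hk with hkq | hkq
  · rw [← hkq, hcq]
  · apply coeff_eq_zero_of_degree_lt
    calc ρ.degree < N.degree := hρdegN
    _ = ((q + 1 : ℕ) : WithBot ℕ) := hNdeg
    _ ≤ (k : WithBot ℕ) := by exact_mod_cast Nat.succ_le_of_lt hkq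
end

section
/- Let q be a prime power and let H = {(x,y) ∈ F_{q^2}^2 : x^{q+1} = y^q + y}. The family of functions H → F_{q^2} given by (x,y) ↦ x^i y^j, indexed by the pairs (i,j) with 0 ≤ i < q^2 and 0 ≤ j < q, is linearly independent over F_{q^2}. -/
/-!
For fixed `x`, the Hermitian equation `x ^ (q + 1) = y ^ q + y` has exactly `q` solutions `y`:
the map `y ↦ y ^ q + y` is additive, its kernel and the fixed field of `t ↦ t ^ q` both have at
most `q` elements (roots of a degree `q` polynomial), and the product of the sizes of its image
and kernel is `q ^ 2`; so the image is that fixed field, which contains the norm `x ^ (q + 1)`.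
Hence a relation `∑ g i j x ^ i y ^ j = 0` on the curve gives, for each `x`, a polynomial in
`y` of degree `< q` with `q` roots, so every `∑ᵢ g i j x ^ i` vanishes on all of `F`; being of
degree `< q ^ 2 = |F|`, these polynomials are zero as well.
-/

open Finset Polynomial

theorem eq_zero_of_forall_sum_mul_pow_eq_zero {R : Type*} [CommRing R] [IsDomain R] {n : ℕ}
    {c : Fin n → R} (S : Finset R) (hS : n ≤ #S)
    (h : ∀ y ∈ S, ∑ j, c j * y ^ (j : ℕ) = 0) : c = 0 := by
  let v : Fin n → R := fun i => S.equivFin.symm (Fin.castLE hS i)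
  have hv : Function.Injective v :=
    Subtype.val_injective.comp (S.equivFin.symm.injective.comp (Fin.castLE_injective hS))
  refine Matrix.eq_zero_of_mulVec_eq_zero (Matrix.det_vandermonde_ne_zero_iff.mpr hv) ?_
  funext i
  simpa [Matrix.mulVec, dotProduct, Matrix.vandermonde_apply, mul_comm] using
    h (v i) (by simp [v])

theorem linearIndependent_monomials_of_fibers {K : Type*} [Field K] {P : K × K → Prop}
    {m n : ℕ} (X : Finset K) (hX : m ≤ #X) (Y : K → Finset K) (hY : ∀ x ∈ X, n ≤ #(Y x))
    (hP : ∀ x ∈ X, ∀ y ∈ Y x, P (x, y)) :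
    LinearIndependent K (fun ij : Fin m × Fin n =>
      fun z : {z : K × K // P z} => z.val.1 ^ (ij.1 : ℕ) * z.val.2 ^ (ij.2 : ℕ)) := by
  rw [Fintype.linearIndependent_iff]
  intro g hg
  have hrows : ∀ x ∈ X, ∀ y ∈ Y x,
      ∑ j : Fin n, (∑ i : Fin m, g (i, j) * x ^ (i : ℕ)) * y ^ (j : ℕ) = 0 := by
    intro x hx y hy
    have := congrFun hg ⟨(x, y), hP x hx y hy⟩
    simpa [Fintype.sum_prod_type_right, sum_mul, mul_assoc] using this
  have hcols : ∀ j, ∀ x ∈ X, ∑ i : Fin m, g (i, j) * x ^ (i : ℕ) = 0 := fun j x hx =>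
    congrFun (eq_zero_of_forall_sum_mul_pow_eq_zero (Y x) (hY x hx) (hrows x hx)) j
  rintro ⟨i, j⟩
  exact congrFun (eq_zero_of_forall_sum_mul_pow_eq_zero X hX (hcols j)) i

theorem card_filter_pow_add_mul_eq_zero_le {K : Type*} [Field K] [Fintype K] [DecidableEq K]
    {n : ℕ} (hn : 2 ≤ n) (c : K) : #{y | y ^ n + c * y = 0} ≤ n := by
  have hdeg : (C c * X : K[X]).degree < n :=
    (degree_C_mul_X_le c).trans_lt (by exact_mod_cast hn)
  have hmonic : (X ^ n + C c * X : K[X]).Monic := monic_X_pow_add hdeg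
  calc #{y | y ^ n + c * y = 0} ≤ (X ^ n + C c * X : K[X]).natDegree := by
        refine card_le_degree_of_subset_roots fun y hy => ?_
        rw [mem_roots hmonic.ne_zero]
        simpa using (mem_filter.mp hy).2
    _ = n := by rw [natDegree_add_eq_left_of_degree_lt (by simpa using hdeg), natDegree_X_pow]

theorem AddMonoidHom.card_image_mul_card_ker {G A : Type*} [AddGroup G] [Fintype G] [AddGroup A]
    [DecidableEq A] (f : G →+ A) : #(univ.image f) * #{g | f g = 0} = Fintype.card G := by
  rw [← card_univ, card_eq_sum_card_image f univ, ← smul_eq_mul, ← sum_const]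
  refine sum_congr rfl fun a ha => AddMonoidHom.card_fiber_eq_of_mem_range f ?_ ?_
  · exact ⟨0, map_zero f⟩
  · simpa using ha

theorem pow_succ_pow_eq_self_of_card_eq_sq {F : Type*} [Field F] [Fintype F] {q : ℕ}
    (hF : Fintype.card F = q ^ 2) (x : F) : (x ^ (q + 1)) ^ q = x ^ (q + 1) := by
  rw [← pow_mul, show (q + 1) * q = q ^ 2 + q by ring, pow_add, ← hF, FiniteField.pow_card,
    ← pow_succ']

section HermitianTrace

variable (F : Type*) [Field F] (p : ℕ) [ExpChar F p] (k : ℕ)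

/-- The trace `y ↦ y ^ q + y` of `F_{q²}/F_q`, for `q = p ^ k`. -/
def traceMap : F →+ F := (iterateFrobenius F p k : F →+ F) + AddMonoidHom.id F

variable {F}

theorem traceMap_apply (y : F) : traceMap F p k y = y ^ p ^ k + y := rfl

variable {p k}

theorem pow_traceMap [Fintype F] (hF : Fintype.card F = (p ^ k) ^ 2) (y : F) :
    traceMap F p k y ^ p ^ k = traceMap F p k y := by
  rw [traceMap_apply, add_pow_expChar_pow, ← pow_mul, ← sq, ← hF, FiniteField.pow_card,
    add_comm]

theorem card_filter_traceMap_eq_norm [Fintype F] [DecidableEq F]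
    (hF : Fintype.card F = (p ^ k) ^ 2) (x : F) :
    #{y | traceMap F p k y = x ^ (p ^ k + 1)} = p ^ k := by
  have hq : 2 ≤ p ^ k :=
    (Nat.one_lt_pow_iff two_ne_zero).mp (hF ▸ Fintype.one_lt_card (α := F))
  set T : Finset F := {t | t ^ p ^ k = t}
  have hT : #T ≤ p ^ k := by
    simpa [T, neg_one_mul, add_neg_eq_zero] using card_filter_pow_add_mul_eq_zero_le hq (-1 : F)
  have hker : #{y : F | traceMap F p k y = 0} ≤ p ^ k := by
    convert card_filter_pow_add_mul_eq_zero_le hq (1 : F) using 3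
    simp [traceMap_apply]
  have himage : univ.image (traceMap F p k) ⊆ T := by
    intro t ht
    obtain ⟨y, -, rfl⟩ := mem_image.mp ht
    simpa [T] using pow_traceMap hF y
  have hprod := (traceMap F p k).card_image_mul_card_ker
  rw [hF] at hprod
  have himage_card : p ^ k ≤ #(univ.image (traceMap F p k)) := by nlinarith [card_le_card himage]
  have hker_card : #{y : F | traceMap F p k y = 0} = p ^ k := by nlinarith [card_le_card himage]
  have hnorm : x ^ (p ^ k + 1) ∈ univ.image (traceMap F p k) := by
    rw [eq_of_subset_of_card_le himage (hT.trans himage_card)]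
    simpa [T] using pow_succ_pow_eq_self_of_card_eq_sq hF x
  rw [AddMonoidHom.card_fiber_eq_of_mem_range _ (by simpa using hnorm) ⟨0, map_zero _⟩,
    hker_card]

end HermitianTrace

/-- Let `q` be a prime power and `H = {(x,y) ∈ F_{q^2}^2 : x^{q+1} = y^q + y}`. The family of
functions `H → F_{q^2}` given by `(x,y) ↦ x^i y^j`, indexed by pairs `(i,j)` with `0 ≤ i < q^2`
and `0 ≤ j < q`, is linearly independent over `F_{q^2}`. -/
theorem hermitian_monomials_linearIndependent (q : ℕ) (hq : IsPrimePow q)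
    (F : Type*) [Field F] [Fintype F] (hF : Fintype.card F = q ^ 2) :
    LinearIndependent F
      (fun (ij : Fin (q ^ 2) × Fin q) =>
        (fun p : {p : F × F // p.1 ^ (q + 1) = p.2 ^ q + p.2} =>
          p.val.1 ^ (ij.1 : ℕ) * p.val.2 ^ (ij.2 : ℕ))) := by
  classical
  obtain ⟨p, k, hp, -, rfl⟩ := hq
  have := Fact.mk (Nat.prime_iff.mpr hp)
  have : CharP F p := charP_of_card_eq_prime_pow (by rw [hF, ← pow_mul])
  refine linearIndependent_monomials_of_fibers univ (by rw [card_univ, hF])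
    (fun x => {y | traceMap F p k y = x ^ (p ^ k + 1)})
    (fun x _ => (card_filter_traceMap_eq_norm hF x).ge) fun x _ y hy => ?_
  rw [← traceMap_apply, (mem_filter.mp hy).2]
end

section
/- Let q be a prime power. The set of affine points of the Hermitian curve, H = {(x,y) ∈ F_{q^2}^2 : x^{q+1} = y^q + y}, has exactly q^3 elements. -/
/-!
Write `q = p ^ i` with `p` the characteristic. The additive map `T y = y ^ q + y` (the trace
`𝔽_{q²} → 𝔽_q`) has kernel and image of size at most `q`, since both lie in the root set of a
polynomial of degree `q`. As `|ker T| * |im T| = q²`, both have exactly `q` elements, so `T` maps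
onto the fixed field `{z | z ^ q = z}`. The norm `x ^ (q + 1)` lies in that field, hence for each
`x` there are exactly `q` values of `y` with `T y = x ^ (q + 1)`.
-/

open Polynomial Finset

theorem Polynomial.ncard_setOf_isRoot_le {R : Type*} [CommRing R] [IsDomain R] {f : R[X]}
    (hf : f ≠ 0) : {x | f.IsRoot x}.ncard ≤ f.natDegree := by
  classical
  have hroots : {x | f.IsRoot x} = ↑f.roots.toFinset := by ext; simp [hf]
  rw [hroots, Set.ncard_coe_finset]
  exact (Multiset.toFinset_card_le _).trans (card_roots' f)

theorem ncard_setOf_pow_add_mul_eq_zero_le {R : Type*} [CommRing R] [IsDomain R] {q : ℕ}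
    (hq : 1 < q) (a : R) : {x : R | x ^ q + a * x = 0}.ncard ≤ q := by
  have hlt : (C a * X).degree < (X ^ q : R[X]).degree := by
    rw [degree_X_pow]
    exact (degree_C_mul_X_le a).trans_lt (by exact_mod_cast hq)
  have hmonic : (X ^ q + C a * X : R[X]).Monic := monic_X_pow_add (degree_X_pow q (R := R) ▸ hlt)
  simpa [natDegree_add_eq_left_of_degree_lt hlt] using ncard_setOf_isRoot_le hmonic.ne_zero

theorem ncard_setOf_pow_eq_self_le {R : Type*} [CommRing R] [IsDomain R] {q : ℕ} (hq : 1 < q) :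
    {x : R | x ^ q = x}.ncard ≤ q := by
  simpa [← sub_eq_add_neg, sub_eq_zero] using ncard_setOf_pow_add_mul_eq_zero_le hq (-1 : R)

theorem ncard_setOf_apply_fst_eq_apply_snd {α β γ : Type*} [Fintype α] [Fintype β]
    [DecidableEq γ] (f : α → γ) (g : β → γ) :
    {p : α × β | f p.1 = g p.2}.ncard = ∑ a, #{b | g b = f a} := by
  rw [Set.ncard_eq_toFinset_card', Set.toFinset_ofPred, card_filter, Fintype.sum_prod_type]
  simp only [card_filter, eq_comm]

theorem Fintype.one_lt_of_card_eq_sq {α : Type*} [Fintype α] [Nontrivial α] {q : ℕ}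
    (h : Fintype.card α = q ^ 2) : 1 < q := by
  have := Fintype.one_lt_card (α := α)
  rw [h] at this
  contrapose! this
  interval_cases q <;> simp

namespace FiniteField

variable {F : Type*} [Field F] [Fintype F]

theorem exists_expChar_pow_eq_of_dvd_card {q : ℕ} (hq : q ∣ Fintype.card F) :
    ∃ p i : ℕ, ExpChar F p ∧ p ^ i = q := by
  obtain ⟨p, _, n, hp, hcard⟩ := FiniteField.card' F
  obtain ⟨i, -, rfl⟩ := (Nat.dvd_prime_pow hp).1 (hcard ▸ hq)
  exact ⟨p, i, .prime hp, rfl⟩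

theorem pow_pow_eq_self_of_card_eq_sq {q : ℕ} (hF : Fintype.card F = q ^ 2) (a : F) :
    (a ^ q) ^ q = a := by
  rw [← pow_mul, ← sq, ← hF, FiniteField.pow_card]

theorem pow_succ_pow_eq_self_of_card_eq_sq {q : ℕ} (hF : Fintype.card F = q ^ 2) (a : F) :
    (a ^ (q + 1)) ^ q = a ^ (q + 1) := by
  rw [pow_succ, mul_pow, pow_pow_eq_self_of_card_eq_sq hF, mul_comm]

end FiniteField

/-- On a field with `(p ^ i) ^ 2` elements this is the trace to the subfield with `p ^ i`
elements. -/
def iterateFrobeniusAddId (F : Type*) [CommRing F] (p i : ℕ) [ExpChar F p] : F →+ F :=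
  (iterateFrobenius F p i : F →+ F) + AddMonoidHom.id F

@[simp]
theorem iterateFrobeniusAddId_apply {F : Type*} [CommRing F] {p i : ℕ} [ExpChar F p] (y : F) :
    iterateFrobeniusAddId F p i y = y ^ p ^ i + y :=
  rfl

namespace iterateFrobeniusAddId

variable {F : Type*} [Field F] [Fintype F] {p i : ℕ} [ExpChar F p]

theorem card_ker_le (hF : Fintype.card F = (p ^ i) ^ 2) :
    Nat.card (iterateFrobeniusAddId F p i).ker ≤ p ^ i := by
  rw [← SetLike.coe_sort_coe, Nat.card_coe_set_eq]
  convert ncard_setOf_pow_add_mul_eq_zero_le (Fintype.one_lt_of_card_eq_sq hF) (1 : F)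
  ext
  simp [AddMonoidHom.mem_ker]

theorem range_subset (hF : Fintype.card F = (p ^ i) ^ 2) :
    Set.range (iterateFrobeniusAddId F p i) ⊆ {z | z ^ p ^ i = z} := by
  rintro _ ⟨y, rfl⟩
  simp only [iterateFrobeniusAddId_apply, Set.mem_ofPred_eq]
  rw [← iterateFrobenius_def, map_add, iterateFrobenius_def, iterateFrobenius_def,
    FiniteField.pow_pow_eq_self_of_card_eq_sq hF, add_comm]

theorem card_range_le (hF : Fintype.card F = (p ^ i) ^ 2) :
    Nat.card (iterateFrobeniusAddId F p i).range ≤ p ^ i := by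
  rw [← SetLike.coe_sort_coe, Nat.card_coe_set_eq, AddMonoidHom.coe_range]
  exact (Set.ncard_le_ncard (range_subset hF)).trans
    (ncard_setOf_pow_eq_self_le (Fintype.one_lt_of_card_eq_sq hF))

theorem card_ker_eq_and_card_range_eq (hF : Fintype.card F = (p ^ i) ^ 2) :
    Nat.card (iterateFrobeniusAddId F p i).ker = p ^ i ∧
      Nat.card (iterateFrobeniusAddId F p i).range = p ^ i := by
  have hmul := (iterateFrobeniusAddId F p i).ker.card_mul_index
  rw [AddSubgroup.index_ker, Nat.card_eq_fintype_card (α := F), hF] at hmul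
  have hker := card_ker_le hF
  have hrange := card_range_le hF
  constructor <;> nlinarith

theorem range_eq (hF : Fintype.card F = (p ^ i) ^ 2) :
    Set.range (iterateFrobeniusAddId F p i) = {z | z ^ p ^ i = z} := by
  refine Set.eq_of_subset_of_ncard_le (range_subset hF) ?_ (Set.toFinite _)
  have hrange := (card_ker_eq_and_card_range_eq hF).2
  rw [← SetLike.coe_sort_coe, Nat.card_coe_set_eq, AddMonoidHom.coe_range] at hrange
  rw [hrange]
  exact ncard_setOf_pow_eq_self_le (Fintype.one_lt_of_card_eq_sq hF)

end iterateFrobeniusAddId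

theorem hermitian_curve_card_general (q : ℕ)
    (F : Type*) [Field F] [Fintype F] (hF : Fintype.card F = q ^ 2) :
    {p : F × F | p.1 ^ (q + 1) = p.2 ^ q + p.2}.ncard = q ^ 3 := by
  classical
  obtain ⟨p, i, _, rfl⟩ := FiniteField.exists_expChar_pow_eq_of_dvd_card (Dvd.intro_left _ hF.symm)
  set T := iterateFrobeniusAddId F p i
  have hfiber (x : F) : #{y | T y = x ^ (p ^ i + 1)} = p ^ i := by
    have hx : x ^ (p ^ i + 1) ∈ Set.range T := by
      rw [iterateFrobeniusAddId.range_eq hF]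
      exact FiniteField.pow_succ_pow_eq_self_of_card_eq_sq hF x
    rw [AddMonoidHom.card_fiber_eq_of_mem_range T hx ⟨0, map_zero T⟩,
      ← (iterateFrobeniusAddId.card_ker_eq_and_card_range_eq hF).1, Nat.card_eq_fintype_card,
      Fintype.card_subtype]
    congr
  calc {pt : F × F | pt.1 ^ (p ^ i + 1) = pt.2 ^ p ^ i + pt.2}.ncard
      = ∑ x : F, #{y | T y = x ^ (p ^ i + 1)} := ncard_setOf_apply_fst_eq_apply_snd _ T
    _ = (p ^ i) ^ 3 := by
      simp only [hfiber, sum_const, card_univ, hF, smul_eq_mul]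
      ring

/-- Let `q` be a prime power. The set of affine points of the Hermitian curve,
`H = {(x,y) ∈ F_{q^2}^2 : x^{q+1} = y^q + y}`, has exactly `q^3` elements. -/
theorem hermitian_curve_card (q : ℕ) (hq : IsPrimePow q)
    (F : Type*) [Field F] [Fintype F] (hF : Fintype.card F = q ^ 2) :
    {p : F × F | p.1 ^ (q + 1) = p.2 ^ q + p.2}.ncard = q ^ 3 :=
  hermitian_curve_card_general q F hF
end

section
/- Let q = 2^k with k ≥ 1, let H = {(x,y) ∈ F_{q^2}^2 : x^{q+1} = y^q + y}, and let C be the Hermitian lifted code, i.e. the F_{q^2}-subspace of functions H → F_{q^2} spanned by the evaluations on H of all good polynomials f ∈ F_{q^2}[X,Y]. Then the dimension K of C over F_{q^2} satisfies K ≥ Σ_{r=0}^{k-1} (4^r - 3^r)·4^{k-r-2}·2^{k-r-1}. -/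
/-- A bivariate polynomial `f` over `F` is *good* (w.r.t. `q`) if for every line `L_{a,b}` of the
Hermitian curve (i.e. `a, b` with `a^{q+1} + b^q + b ≠ 0`) there is a univariate polynomial `g`
of degree less than `q` such that `f` agrees with `g(x)` at every point `(x, ax+b)` of the
Hermitian curve. -/
def IsGoodPoly (q : ℕ) {F : Type*} [Field F] (f : MvPolynomial (Fin 2) F) : Prop :=
  ∀ a b : F, a ^ (q + 1) + b ^ q + b ≠ 0 →
    ∃ g : Polynomial F, g.degree < (q : WithBot ℕ) ∧
      ∀ x y : F, x ^ (q + 1) = y ^ q + y → y = a * x + b →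
        MvPolynomial.eval ![x, y] f = Polynomial.eval x g

section Aux
variable {k q : ℕ} {F : Type*} [Field F] [Fintype F]

lemma hlc_char2 (hk : 1 ≤ k) (hq : q = 2 ^ k) (hF : Fintype.card F = q ^ 2) :
    CharP F 2 := by
  have h0 : ((Fintype.card F : ℕ) : F) = 0 := FiniteField.cast_card_eq_zero F
  rw [hF, hq, ← pow_mul] at h0
  push_cast at h0
  have h2 : (2 : F) = 0 := pow_eq_zero_iff (n := k * 2) (by omega) |>.mp h0
  exact CharTwo.of_one_ne_zero_of_two_eq_zero one_ne_zero h2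

lemma hlc_frobq (hk : 1 ≤ k) (hq : q = 2 ^ k) (hF : Fintype.card F = q ^ 2) :
    ∀ u v : F, (u + v) ^ q = u ^ q + v ^ q := by
  haveI := hlc_char2 hk hq hF
  haveI : Fact (Nat.Prime 2) := ⟨Nat.prime_two⟩
  intro u v
  rw [hq]
  exact add_pow_char_pow u v 2 k

lemma hlc_powqq (hq : q = 2 ^ k) (hF : Fintype.card F = q ^ 2) :
    ∀ u : F, u ^ (q * q) = u := by
  intro u
  have := FiniteField.pow_card u
  rwa [hF, pow_two] at this

open Polynomial in
lemma hlc_good (hk : 1 ≤ k) (hq : q = 2 ^ k) (hF : Fintype.card F = q ^ 2)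
    (a1 a0 b : ℕ) (ha1 : 2 * a1 + 2 ≤ q) (hab : 2 * a0 + 2 * b + 2 ≤ q) :
    IsGoodPoly q ((MvPolynomial.X 0) ^ (2 * a1 * q + 2 * a0) * (MvPolynomial.X 1) ^ (2 * b) :
      MvPolynomial (Fin 2) F) := by
  haveI := hlc_char2 hk hq hF
  have h2 : (2 : F) = 0 := CharTwo.two_eq_zero
  have hfrob := hlc_frobq hk hq hF
  have hqq := hlc_powqq hq hF
  have hq2 : 2 ≤ q := by rw [hq]; calc 2 = 2^1 := (pow_one 2).symm
                                      _ ≤ 2^k := Nat.pow_le_pow_right (by norm_num) hk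
  intro α β hδ
  set δ : F := α ^ (q + 1) + β ^ q + β with hδdef
  set γ : F := α ^ (q + 1) + β with hγdef
  set N : ℕ := a0 + b with hN
  set M : ℕ := a1 + N with hM
  set h : F[X] := (X + C α) ^ a1 * (C δ + C (α ^ q) * X) ^ a0 * (C γ * X + C (α * δ)) ^ b
    with hh
  set E : ℕ → ℕ := fun j => if j ≤ N then 2 * (N - j) else q + 1 - 2 * (j - N) with hE
  set g : F[X] := ∑ j ∈ Finset.range (M + 1),
      C ((h.coeff j) ^ 2 * (if j ≤ N then 1 else δ) * (δ⁻¹) ^ (E j)) * (X + C (α ^ q)) ^ (E j)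
    with hg
  have hEle : ∀ j, E j ≤ q - 1 := by
    intro j
    rw [hE]
    by_cases hj : j ≤ N
    · simp only [hj, if_true]; omega
    · simp only [hj, if_false]; omega
  refine ⟨g, ?_, ?_⟩
  · -- degree bound
    have hnd : g.natDegree ≤ q - 1 := by
      refine Polynomial.natDegree_sum_le_of_forall_le _ _ (fun j hj => ?_)
      calc (C ((h.coeff j) ^ 2 * (if j ≤ N then 1 else δ) * (δ⁻¹) ^ (E j)) *
              (X + C (α ^ q)) ^ (E j)).natDegree
          ≤ ((X + C (α ^ q)) ^ (E j)).natDegree := natDegree_C_mul_le _ _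
        _ ≤ E j * (X + C (α ^ q)).natDegree := natDegree_pow_le
        _ ≤ E j * 1 := by rw [natDegree_X_add_C]
        _ ≤ q - 1 := by rw [mul_one]; exact hEle j
    have hq1 : (q - 1 : ℕ) < q := by omega
    calc g.degree ≤ (g.natDegree : WithBot ℕ) := degree_le_natDegree
      _ ≤ ((q - 1 : ℕ) : WithBot ℕ) := by exact_mod_cast hnd
      _ < (q : WithBot ℕ) := by exact_mod_cast hq1
  · intro x y hxy hy
    -- the LHS is x^(2a1q+2a0) * y^(2b)
    have hlhs : MvPolynomial.eval ![x, y]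
        ((MvPolynomial.X 0) ^ (2 * a1 * q + 2 * a0) * (MvPolynomial.X 1) ^ (2 * b) :
          MvPolynomial (Fin 2) F) = x ^ (2 * a1 * q + 2 * a0) * y ^ (2 * b) := by
      simp
    rw [hlhs]
    set w : F := x ^ q + α with hw
    have hyq : y ^ q = α ^ q * x ^ q + β ^ q := by
      rw [hy, hfrob, mul_pow]
    have hwq : w ^ q = x + α ^ q := by
      rw [hw, hfrob, ← pow_mul, hqq]
    have hdelta : w ^ (q + 1) = δ := by
      rw [pow_succ, hwq, hw, hδdef]
      linear_combination hxy + hyq + hy + (α * x + α ^ q * x ^ q + α^(q+1) - β^q - β - α*α^q + β + β^q) * h2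
    have hwne : w ≠ 0 := by
      intro h0
      rw [h0, zero_pow (by omega)] at hdelta
      exact hδ hdelta.symm
    have hxw : x * w = δ + α ^ q * w := by
      rw [hw, hδdef]
      linear_combination hxy + hyq + hy + (α * x - α ^ (q+1)) * h2
    have hyw : y * w = α * δ + γ * w := by
      rw [hγdef]
      linear_combination w * hy + α * hxw
    have hxq : x ^ q = w + α := by
      rw [hw]; linear_combination (-α) * h2
    have hwqd : δ⁻¹ * w ^ q = w⁻¹ := by
      have h1 : w * (δ⁻¹ * w ^ q) = 1 := by
        calc w * (δ⁻¹ * w ^ q) = (w ^ q * w) * δ⁻¹ := by ring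
          _ = δ * δ⁻¹ := by rw [← pow_succ, hdelta]
          _ = 1 := mul_inv_cancel₀ hδ
      exact (inv_eq_of_mul_eq_one_right h1).symm
    have hhdeg : h.natDegree < M + 1 := by
      have d1 : ((X : F[X]) + C α).natDegree ≤ 1 := by rw [natDegree_X_add_C]
      have d2 : ((C δ + C (α ^ q) * X : F[X])).natDegree ≤ 1 := by
        refine le_trans (natDegree_add_le _ _) ?_
        simp only [natDegree_C, natDegree_C_mul_le, max_le_iff]
        exact ⟨by omega, le_trans (natDegree_C_mul_le _ _) (by rw [natDegree_X])⟩
      have d3 : ((C γ * X + C (α * δ) : F[X])).natDegree ≤ 1 := by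
        refine le_trans (natDegree_add_le _ _) ?_
        simp only [natDegree_C, max_le_iff]
        exact ⟨le_trans (natDegree_C_mul_le _ _) (by rw [natDegree_X]), by omega⟩
      have hb1 : (((X : F[X]) + C α) ^ a1).natDegree ≤ a1 := by
        refine le_trans (natDegree_pow_le) ?_
        calc a1 * ((X : F[X]) + C α).natDegree ≤ a1 * 1 := Nat.mul_le_mul_left _ d1
          _ = a1 := by omega
      have hb2 : (((C δ + C (α ^ q) * X : F[X])) ^ a0).natDegree ≤ a0 := by
        refine le_trans (natDegree_pow_le) ?_
        calc a0 * ((C δ + C (α ^ q) * X : F[X])).natDegree ≤ a0 * 1 := Nat.mul_le_mul_left _ d2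
          _ = a0 := by omega
      have hb3 : (((C γ * X + C (α * δ) : F[X])) ^ b).natDegree ≤ b := by
        refine le_trans (natDegree_pow_le) ?_
        calc b * ((C γ * X + C (α * δ) : F[X])).natDegree ≤ b * 1 := Nat.mul_le_mul_left _ d3
          _ = b := by omega
      have := natDegree_mul_le (p := (X + C α) ^ a1 * (C δ + C (α ^ q) * X) ^ a0)
        (q := (C γ * X + C (α * δ) : F[X]) ^ b)
      have := natDegree_mul_le (p := ((X : F[X]) + C α) ^ a1) (q := (C δ + C (α ^ q) * X : F[X]) ^ a0)
      rw [hh]; omega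
    have hB : Polynomial.eval x g * w ^ (2 * N) = (Polynomial.eval w h) ^ 2 := by
      have hevg : Polynomial.eval x g = ∑ j ∈ Finset.range (M + 1),
          (h.coeff j ^ 2 * (if j ≤ N then 1 else δ) * δ⁻¹ ^ E j) * (x + α ^ q) ^ (E j) := by
        rw [hg]
        simp [Polynomial.eval_finset_sum]
      have hxa : x + α ^ q = w ^ q := hwq.symm
      have hevh : Polynomial.eval w h = ∑ j ∈ Finset.range (M + 1), h.coeff j * w ^ j :=
        Polynomial.eval_eq_sum_range' hhdeg w
      rw [hevg, hxa, Finset.sum_mul, hevh, CharTwo.sum_sq]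
      refine Finset.sum_congr rfl (fun j hj => ?_)
      have hsq : (h.coeff j * w ^ j) ^ 2 = h.coeff j ^ 2 * w ^ (2 * j) := by
        rw [mul_pow, ← pow_mul, mul_comm j 2]
      rw [hsq]
      have hjM : j ≤ M := by
        have := Finset.mem_range.mp hj; omega
      by_cases hjN : j ≤ N
      · have hEj : E j = 2 * (N - j) := by rw [hE]; simp [hjN]
        have e1 : δ⁻¹ ^ (2 * (N - j)) * (w ^ q) ^ (2 * (N - j)) = (w⁻¹) ^ (2 * (N - j)) := by
          rw [← mul_pow, hwqd]
        have e2 : w ^ (2 * N) = w ^ (2 * (N - j)) * w ^ (2 * j) := by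
          rw [← pow_add]; congr 1; omega
        rw [hEj, if_pos hjN]
        calc h.coeff j ^ 2 * 1 * δ⁻¹ ^ (2 * (N - j)) * (w ^ q) ^ (2 * (N - j)) * w ^ (2 * N)
            = h.coeff j ^ 2 * ((δ⁻¹ ^ (2 * (N - j)) * (w ^ q) ^ (2 * (N - j))) * w ^ (2 * N)) := by
              ring
          _ = h.coeff j ^ 2 * ((w⁻¹) ^ (2 * (N - j)) * (w ^ (2 * (N - j)) * w ^ (2 * j))) := by
              rw [e1, e2]
          _ = h.coeff j ^ 2 * ((w⁻¹ * w) ^ (2 * (N - j)) * w ^ (2 * j)) := by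
              rw [mul_pow]; ring
          _ = h.coeff j ^ 2 * w ^ (2 * j) := by
              rw [inv_mul_cancel₀ hwne, one_pow, one_mul]
      · have hEj : E j = q + 1 - 2 * (j - N) := by rw [hE]; simp [hjN]
        have hjN' : N < j := by omega
        have h2jN : 2 * (j - N) ≤ 2 * a1 := by omega
        have e3 : w ^ (q + 1) * w ^ (2 * N) = w ^ (E j) * w ^ (2 * j) := by
          rw [← pow_add, ← pow_add]; congr 1; rw [hEj]; omega
        have e1 : δ⁻¹ ^ (E j) * (w ^ q) ^ (E j) = (w⁻¹) ^ (E j) := by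
          rw [← mul_pow, hwqd]
        rw [hEj, if_neg hjN]
        calc h.coeff j ^ 2 * δ * δ⁻¹ ^ (q + 1 - 2 * (j - N)) * (w ^ q) ^ (q + 1 - 2 * (j - N))
              * w ^ (2 * N)
            = h.coeff j ^ 2 * ((δ⁻¹ ^ (E j) * (w ^ q) ^ (E j)) * (δ * w ^ (2 * N))) := by
              rw [hEj]; ring
          _ = h.coeff j ^ 2 * ((w⁻¹) ^ (E j) * (w ^ (E j) * w ^ (2 * j))) := by
              rw [e1, ← hdelta, e3]
          _ = h.coeff j ^ 2 * ((w⁻¹ * w) ^ (E j) * w ^ (2 * j)) := by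
              rw [mul_pow]; ring
          _ = h.coeff j ^ 2 * w ^ (2 * j) := by
              rw [inv_mul_cancel₀ hwne, one_pow, one_mul]
    have hA : x ^ (2 * a1 * q + 2 * a0) * y ^ (2 * b) * w ^ (2 * N) =
        (Polynomial.eval w h) ^ 2 := by
      have hevh2 : Polynomial.eval w h =
          (w + α) ^ a1 * (δ + α ^ q * w) ^ a0 * (γ * w + α * δ) ^ b := by
        rw [hh]; simp
      have exp1 : x ^ (2 * a1 * q + 2 * a0) = ((x ^ q) ^ (2 * a1)) * x ^ (2 * a0) := by
        rw [pow_add]; congr 1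
        rw [← pow_mul]; congr 1; ring
      have exp2 : w ^ (2 * N) = w ^ (2 * a0) * w ^ (2 * b) := by
        rw [← pow_add]; congr 1; omega
      calc x ^ (2 * a1 * q + 2 * a0) * y ^ (2 * b) * w ^ (2 * N)
          = ((x ^ q) ^ (2 * a1)) * (x * w) ^ (2 * a0) * (y * w) ^ (2 * b) := by
            rw [exp1, exp2, mul_pow, mul_pow]; ring
        _ = ((w + α) ^ (2 * a1)) * (δ + α ^ q * w) ^ (2 * a0) * (α * δ + γ * w) ^ (2 * b) := by
            rw [hxq, hxw, hyw]
        _ = (Polynomial.eval w h) ^ 2 := by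
            rw [hevh2, mul_pow, mul_pow, ← pow_mul, ← pow_mul, ← pow_mul]
            ring
    have hkey : x ^ (2 * a1 * q + 2 * a0) * y ^ (2 * b) * w ^ (2 * N) =
        Polynomial.eval x g * w ^ (2 * N) := by rw [hA, hB]
    exact mul_right_cancel₀ (pow_ne_zero _ hwne) hkey

open Polynomial Finset in
open scoped Classical in
lemma hlc_fiber (hk : 1 ≤ k) (hq : q = 2 ^ k) (hF : Fintype.card F = q ^ 2) (x : F) :
    q ≤ (Finset.univ.filter fun y : F => y ^ q + y = x ^ (q + 1)).card := by
  haveI := hlc_char2 hk hq hF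
  have h2 : (2 : F) = 0 := CharTwo.two_eq_zero
  have hfrob := hlc_frobq hk hq hF
  have hqq := hlc_powqq hq hF
  have hq2 : 2 ≤ q := by
    rw [hq]
    calc 2 = 2 ^ 1 := (pow_one 2).symm
      _ ≤ 2 ^ k := Nat.pow_le_pow_right (by norm_num) hk
  set Fix : Finset F := Finset.univ.filter (fun z : F => z ^ q = z) with hFix
  have hFixcard : Fix.card ≤ q := by
    set P : F[X] := X ^ q - X with hP
    have hdegX : degree (X : F[X]) < degree ((X : F[X]) ^ q) := by
      rw [degree_X_pow, degree_X]
      exact_mod_cast (by omega : 1 < q)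
    have hdeg : P.degree = q := by
      rw [hP, degree_sub_eq_left_of_degree_lt hdegX, degree_X_pow]
    have hP0 : P ≠ 0 := by
      intro h0
      rw [h0, degree_zero] at hdeg
      simp at hdeg
    have hnd : P.natDegree = q := natDegree_eq_of_degree_eq_some hdeg
    have hsub : Fix ⊆ P.roots.toFinset := by
      intro z hz
      rw [Multiset.mem_toFinset, mem_roots hP0]
      have hz2 := (Finset.mem_filter.mp hz).2
      simp [hP, IsRoot, hz2]
    calc Fix.card ≤ P.roots.toFinset.card := Finset.card_le_card hsub
      _ ≤ Multiset.card P.roots := Multiset.toFinset_card_le _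
      _ ≤ P.natDegree := P.card_roots'
      _ = q := hnd
  set T : F → F := fun y => y ^ q + y with hT
  have hTadd : ∀ u v : F, T (u + v) = T u + T v := by
    intro u v
    simp only [hT]
    rw [hfrob]
    ring
  have himg : Finset.univ.image T ⊆ Fix := by
    intro z hz
    obtain ⟨y, _, rfl⟩ := Finset.mem_image.mp hz
    rw [hFix, Finset.mem_filter]
    refine ⟨Finset.mem_univ _, ?_⟩
    simp only [hT]
    rw [hfrob, ← pow_mul, hqq]
    ring
  set K : ℕ := (Finset.univ.filter fun y : F => T y = 0).card with hK
  have hKle : K ≤ q := by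
    refine le_trans (le_trans (Finset.card_le_card ?_) (le_refl Fix.card)) hFixcard
    intro y hy
    have hy2 := (Finset.mem_filter.mp hy).2
    simp only [hT] at hy2
    rw [hFix, Finset.mem_filter]
    refine ⟨Finset.mem_univ _, ?_⟩
    linear_combination hy2 - y * h2
  have hfib : ∀ z ∈ Finset.univ.image T,
      (Finset.univ.filter fun y : F => T y = z).card = K := by
    intro z hz
    obtain ⟨y₀, _, hy₀⟩ := Finset.mem_image.mp hz
    rw [hK]
    apply Finset.card_bij' (fun y _ => y + y₀) (fun y _ => y + y₀)
    · intro a ha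
      rw [Finset.mem_filter] at ha ⊢
      refine ⟨Finset.mem_univ _, ?_⟩
      rw [hTadd, ha.2, hy₀]
      exact CharTwo.add_self_eq_zero z
    · intro a ha
      rw [Finset.mem_filter] at ha ⊢
      refine ⟨Finset.mem_univ _, ?_⟩
      rw [hTadd, ha.2, hy₀, zero_add]
    · intro a _
      rw [add_assoc, CharTwo.add_self_eq_zero, add_zero]
    · intro a _
      rw [add_assoc, CharTwo.add_self_eq_zero, add_zero]
  have htot : q ^ 2 = (Finset.univ.image T).card * K := by
    have hcf := Finset.card_eq_sum_card_fiberwise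
      (s := (Finset.univ : Finset F)) (t := Finset.univ.image T) (f := T)
      (fun u _ => Finset.mem_image_of_mem T (Finset.mem_univ u))
    calc q ^ 2 = (Finset.univ : Finset F).card := by rw [Finset.card_univ, hF]
      _ = ∑ z ∈ Finset.univ.image T, (Finset.univ.filter fun y => T y = z).card := hcf
      _ = ∑ _z ∈ Finset.univ.image T, K := Finset.sum_congr rfl hfib
      _ = (Finset.univ.image T).card * K := by rw [Finset.sum_const, smul_eq_mul]
  have himgcard : (Finset.univ.image T).card ≤ q := le_trans (Finset.card_le_card himg) hFixcard
  have hKq : q ≤ K := by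
    nlinarith [htot, himgcard, hKle]
  have himgq : q ≤ (Finset.univ.image T).card := by
    nlinarith [htot, himgcard, hKle]
  have himgeq : Finset.univ.image T = Fix :=
    Finset.eq_of_subset_of_card_le himg (le_trans hFixcard himgq)
  have hxfix : x ^ (q + 1) ∈ Fix := by
    rw [hFix, Finset.mem_filter]
    refine ⟨Finset.mem_univ _, ?_⟩
    rw [← pow_mul]
    have hmm : (q + 1) * q = q * q + q := by ring
    rw [hmm, pow_add, hqq, ← pow_succ']
  have hfx := hfib (x ^ (q + 1)) (by rw [himgeq]; exact hxfix)
  have hsame : (Finset.univ.filter fun y : F => y ^ q + y = x ^ (q + 1)) =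
      (Finset.univ.filter fun y : F => T y = x ^ (q + 1)) := by
    simp only [hT]
  rw [hsame, hfx]
  exact hKq
lemma hlc_cl1 : ∀ r : ℕ, ((4 : ℚ) ^ r - 3 ^ r) * 4 ≤ r * 4 ^ r := by
  intro r
  induction r with
  | zero => norm_num
  | succ n ih =>
    have h3 : (3 : ℚ) ^ n ≤ 4 ^ n := by
      exact pow_le_pow_left₀ (by norm_num) (by norm_num) n
    have h4 : (0:ℚ) < 4 ^ n := by positivity
    push_cast
    rw [pow_succ, pow_succ]
    push_cast at ih
    nlinarith [ih, h3, h4]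

lemma hlc_cl2 : ∀ K : ℕ, ∑ r ∈ Finset.range K, (r : ℚ) / 2 ^ r ≤ 2 - 2 * (K + 1) / 2 ^ K := by
  intro K
  induction K with
  | zero => norm_num
  | succ n ih =>
    rw [Finset.sum_range_succ]
    have hp : (0 : ℚ) < 2 ^ n := by positivity
    have heq : 2 - 2 * ((n : ℚ) + 1) / 2 ^ n + n / 2 ^ n = 2 - 2 * ((n + 1 : ℕ) + 1) / 2 ^ (n + 1) := by
      field_simp
      push_cast; ring
    push_cast at heq ⊢
    linarith [ih, heq.le, heq.ge]

lemma hlc_digit {q a c a' c' : ℕ} (hq : 0 < q) (hc : c < q) (hc' : c' < q)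
    (h : a * q + c = a' * q + c') : a = a' ∧ c = c' := by
  have h1 : (c + a * q) % q = c := by
    rw [Nat.add_mul_mod_self_right, Nat.mod_eq_of_lt hc]
  have h2 : (c' + a' * q) % q = c' := by
    rw [Nat.add_mul_mod_self_right, Nat.mod_eq_of_lt hc']
  have h3 : (c + a * q) / q = a := by
    rw [Nat.add_mul_div_right _ _ hq, Nat.div_eq_of_lt hc, zero_add]
  have h4 : (c' + a' * q) / q = a' := by
    rw [Nat.add_mul_div_right _ _ hq, Nat.div_eq_of_lt hc', zero_add]
  have hh : c + a * q = c' + a' * q := by omega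
  constructor
  · rw [← h3, ← h4, hh]
  · rw [← h1, ← h2, hh]

end Aux

/-- (López et al., Claim 12.) The dimension `K` of the Hermitian lifted code satisfies
`K ≥ Σ_{r=0}^{k-1} (4^r - 3^r)·4^{k-r-2}·2^{k-r-1}`. -/
theorem hermitian_lifted_code_dim_ge_lopez (k : ℕ) (hk : 1 ≤ k) (q : ℕ) (hq : q = 2 ^ k)
    (F : Type*) [Field F] [Fintype F] (hF : Fintype.card F = q ^ 2) :
    ((Module.finrank F ↥(Submodule.span F
        {v : {p : F × F // p.1 ^ (q + 1) = p.2 ^ q + p.2} → F |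
          ∃ f : MvPolynomial (Fin 2) F, IsGoodPoly q f ∧
            v = fun p => MvPolynomial.eval ![p.val.1, p.val.2] f})) : ℚ)
      ≥ ∑ r ∈ Finset.range k,
          ((4 : ℚ) ^ r - 3 ^ r) * (4 : ℚ) ^ ((k : ℤ) - r - 2) * (2 : ℚ) ^ ((k : ℤ) - r - 1) := by
  classical
  have hq2 : 2 ≤ q := by
    rw [hq]
    calc 2 = 2 ^ 1 := (pow_one 2).symm
      _ ≤ 2 ^ k := Nat.pow_le_pow_right (by norm_num) hk
  have hpow1 : 2 ^ (k - 1) * 2 = q := by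
    rw [hq, ← pow_succ]
    congr 1
    omega
  have h22 : 2 * 2 ^ (k - 2) ≤ 2 ^ (k - 1) + 1 := by
    rcases k with _ | _ | m
    · omega
    · norm_num
    · rw [show m + 2 - 2 = m by omega, show m + 2 - 1 = m + 1 by omega, pow_succ]
      omega
  set ι := (Fin (2 ^ (k - 1)) × Fin (2 ^ (k - 2)) × Fin (2 ^ (k - 2))) with hι
  set e1 : ι → ℕ := fun i => 2 * i.1.val * q + 2 * i.2.1.val with he1
  set e2 : ι → ℕ := fun i => 2 * i.2.2.val with he2
  set fp : ι → MvPolynomial (Fin 2) F := fun i =>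
    (MvPolynomial.X 0) ^ (e1 i) * (MvPolynomial.X 1) ^ (e2 i) with hfp
  set v : ι → ({p : F × F // p.1 ^ (q + 1) = p.2 ^ q + p.2} → F) := fun i p =>
    MvPolynomial.eval ![p.val.1, p.val.2] (fp i) with hv
  have hcon1 : ∀ i : ι, 2 * i.1.val + 2 ≤ q := by
    intro i
    have := i.1.isLt
    omega
  have hcon2 : ∀ i : ι, 2 * i.2.1.val + 2 * i.2.2.val + 2 ≤ q := by
    intro i
    have h1 := i.2.1.isLt
    have h2 := i.2.2.isLt
    omega
  have hgood : ∀ i : ι, IsGoodPoly q (fp i) := by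
    intro i
    rw [hfp]
    simp only [he1, he2]
    exact hlc_good hk hq hF i.1.val i.2.1.val i.2.2.val (hcon1 i) (hcon2 i)
  have hli : LinearIndependent F v := by
    rw [linearIndependent_iff']
    intro s gc hsum i hi
    have hpt : ∀ x y : F, x ^ (q + 1) = y ^ q + y →
        ∑ i' ∈ s, gc i' * (x ^ e1 i' * y ^ e2 i') = 0 := by
      intro x y hxy
      have hc := congrFun hsum ⟨(x, y), hxy⟩
      simp only [Finset.sum_apply, Pi.smul_apply, smul_eq_mul, Pi.zero_apply, hv, hfp,
        map_mul, map_pow, MvPolynomial.eval_X, Matrix.cons_val_zero, Matrix.cons_val_one,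
        Matrix.head_cons] at hc
      exact hc
    have stage1 : ∀ x : F,
        ∑ i' ∈ s.filter (fun i' => e2 i = e2 i'), gc i' * x ^ e1 i' = 0 := by
      intro x
      set Px : Polynomial F :=
        ∑ i' ∈ s, Polynomial.C (gc i' * x ^ e1 i') * Polynomial.X ^ e2 i' with hPx
      have hdeg : Px.natDegree < q := by
        refine lt_of_le_of_lt
          (Polynomial.natDegree_sum_le_of_forall_le s _ (fun j _ => ?_)) (show q - 2 < q by omega)
        refine le_trans (Polynomial.natDegree_C_mul_le _ _) ?_
        rw [Polynomial.natDegree_X_pow]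
        have := hcon2 j
        simp only [he2]
        omega
      have hvan : ∀ yy ∈ (Finset.univ.filter fun yy : F => yy ^ q + yy = x ^ (q + 1)),
          Px.eval yy = 0 := by
        intro yy hyy
        have hxy : x ^ (q + 1) = yy ^ q + yy := ((Finset.mem_filter.mp hyy).2).symm
        rw [hPx]
        simp only [Polynomial.eval_finset_sum, Polynomial.eval_mul, Polynomial.eval_pow,
          Polynomial.eval_C, Polynomial.eval_X]
        rw [← hpt x yy hxy]
        exact Finset.sum_congr rfl (fun j _ => by ring)
      have hPx0 : Px = 0 :=
        Polynomial.eq_zero_of_natDegree_lt_card_of_eval_eq_zero' Px _ hvan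
          (lt_of_lt_of_le hdeg (hlc_fiber hk hq hF x))
      have hco := congrArg (fun p => Polynomial.coeff p (e2 i)) hPx0
      simp only [hPx, Polynomial.finset_sum_coeff, Polynomial.coeff_C_mul,
        Polynomial.coeff_X_pow, Polynomial.coeff_zero, mul_ite, mul_one, mul_zero] at hco
      rw [Finset.sum_filter]
      exact hco
    set Rp : Polynomial F :=
      ∑ i' ∈ s.filter (fun i' => e2 i = e2 i'), Polynomial.C (gc i') * Polynomial.X ^ e1 i'
      with hRp
    have hdeg2 : Rp.natDegree < Fintype.card F := by
      rw [hF, pow_two]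
      have hbound : ∀ j : ι, e1 j < q * q := by
        intro j
        have h7 : (2 * j.1.val + 2) * q ≤ q * q := Nat.mul_le_mul_right q (hcon1 j)
        have h8 := hcon2 j
        simp only [he1]
        nlinarith [h7, h8, hq2]
      refine lt_of_le_of_lt
        (Polynomial.natDegree_sum_le_of_forall_le _ _ (fun j _ => ?_)) (Nat.sub_lt (by positivity) one_pos)
      refine le_trans (Polynomial.natDegree_C_mul_le _ _) ?_
      rw [Polynomial.natDegree_X_pow]
      have := hbound j
      omega
    have hvan2 : ∀ z : F, Rp.eval z = 0 := by
      intro z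
      rw [hRp]
      simp only [Polynomial.eval_finset_sum, Polynomial.eval_mul, Polynomial.eval_pow,
        Polynomial.eval_C, Polynomial.eval_X]
      exact stage1 z
    have hRp0 : Rp = 0 :=
      Polynomial.eq_zero_of_natDegree_lt_card_of_eval_eq_zero' Rp Finset.univ
        (fun z _ => hvan2 z) (by rwa [Finset.card_univ])
    have hco2 := congrArg (fun p => Polynomial.coeff p (e1 i)) hRp0
    simp only [hRp, Polynomial.finset_sum_coeff, Polynomial.coeff_C_mul,
      Polynomial.coeff_X_pow, Polynomial.coeff_zero, mul_ite, mul_one, mul_zero] at hco2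
    have hsingle : (∑ x ∈ Finset.filter (fun i' => e2 i = e2 i') s,
        if e1 i = e1 x then gc x else 0) = (if e1 i = e1 i then gc i else 0) := by
      refine Finset.sum_eq_single_of_mem i (Finset.mem_filter.mpr ⟨hi, rfl⟩) ?_
      intro j hj hne
      have hj2 : e2 i = e2 j := (Finset.mem_filter.mp hj).2
      rw [if_neg]
      intro he1eq
      apply hne
      have hc2i := hcon2 i
      have hc2j := hcon2 j
      have hdig := hlc_digit (show 0 < q by omega)
        (show 2 * j.2.1.val < q by omega) (show 2 * i.2.1.val < q by omega)
        (by simpa only [he1] using he1eq.symm)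
      simp only [he2] at hj2
      have hd1 := hdig.1
      have hd2 := hdig.2
      have hj1 : j.1 = i.1 := Fin.ext (by omega)
      have hj21 : j.2.1 = i.2.1 := Fin.ext (by omega)
      have hj22 : j.2.2 = i.2.2 := Fin.ext (by omega)
      exact Prod.ext hj1 (Prod.ext hj21 hj22)
    rw [hsingle] at hco2
    simpa using hco2
  -- span and finrank
  have hsub : Set.range v ⊆
      {w : {p : F × F // p.1 ^ (q + 1) = p.2 ^ q + p.2} → F |
        ∃ f : MvPolynomial (Fin 2) F, IsGoodPoly q f ∧
          w = fun p => MvPolynomial.eval ![p.val.1, p.val.2] f} := by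
    rintro _ ⟨i, rfl⟩
    exact ⟨fp i, hgood i, rfl⟩
  have hfd : FiniteDimensional F ({p : F × F // p.1 ^ (q + 1) = p.2 ^ q + p.2} → F) := by
    infer_instance
  have hrank := finrank_span_eq_card (R := F) hli
  have hmono := Submodule.finrank_mono (Submodule.span_mono hsub
    (R := F))
  have hfin : Fintype.card ι ≤ Module.finrank F (Submodule.span F
      {w : {p : F × F // p.1 ^ (q + 1) = p.2 ^ q + p.2} → F |
        ∃ f : MvPolynomial (Fin 2) F, IsGoodPoly q f ∧
          w = fun p => MvPolynomial.eval ![p.val.1, p.val.2] f}) := by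
    rw [← hrank]
    exact hmono
  have hcard : Fintype.card ι = 2 ^ (k - 1) * (2 ^ (k - 2) * 2 ^ (k - 2)) := by
    simp [hι]
  rw [ge_iff_le]
  have hterm : ∀ r ∈ Finset.range k,
      ((4 : ℚ) ^ r - 3 ^ r) * (4 : ℚ) ^ ((k : ℤ) - r - 2) * (2 : ℚ) ^ ((k : ℤ) - r - 1)
        ≤ ((r : ℚ) / 2 ^ r) * ((2 : ℚ) ^ (3 * k) / 128) := by
    intro r _
    have h4 : (4 : ℚ) ^ ((k : ℤ) - r - 2) = 4 ^ k / (4 ^ r * 16) := by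
      rw [show (k : ℤ) - r - 2 = (k : ℤ) - ((r + 2 : ℕ) : ℤ) by push_cast; ring,
        zpow_sub₀ (by norm_num : (4:ℚ) ≠ 0), zpow_natCast, zpow_natCast, pow_add]
      norm_num
    have h2 : (2 : ℚ) ^ ((k : ℤ) - r - 1) = 2 ^ k / (2 ^ r * 2) := by
      rw [show (k : ℤ) - r - 1 = (k : ℤ) - ((r + 1 : ℕ) : ℤ) by push_cast; ring,
        zpow_sub₀ (by norm_num : (2:ℚ) ≠ 0), zpow_natCast, zpow_natCast, pow_add]
      norm_num
    rw [h4, h2]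
    have hL : ((4 : ℚ) ^ r - 3 ^ r) * (4 ^ k / (4 ^ r * 16)) * (2 ^ k / (2 ^ r * 2))
        = (((4 : ℚ) ^ r - 3 ^ r) * 4 ^ k * 2 ^ k) / ((4 ^ r * 16) * (2 ^ r * 2)) := by
      ring
    have hR : ((r : ℚ) / 2 ^ r) * ((2 : ℚ) ^ (3 * k) / 128)
        = ((r : ℚ) * 2 ^ (3 * k)) / (2 ^ r * 128) := by
      ring
    rw [hL, hR, div_le_div_iff₀ (by positivity) (by positivity)]
    have h8k : (2 : ℚ) ^ (3 * k) = 4 ^ k * 2 ^ k := by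
      rw [pow_mul, ← mul_pow]
      norm_num
    rw [h8k]
    have hfact := mul_le_mul_of_nonneg_right (hlc_cl1 r)
      (show (0 : ℚ) ≤ 32 * 2 ^ r * 4 ^ k * 2 ^ k by positivity)
    refine le_trans (le_of_eq (by ring)) (le_trans hfact (le_of_eq (by ring)))
  have hsum1 := Finset.sum_le_sum hterm
  have hsum2 : ∑ r ∈ Finset.range k, ((r : ℚ) / 2 ^ r) * ((2 : ℚ) ^ (3 * k) / 128)
      = (∑ r ∈ Finset.range k, (r : ℚ) / 2 ^ r) * ((2 : ℚ) ^ (3 * k) / 128) := by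
    rw [← Finset.sum_mul]
  have hle2 : (∑ r ∈ Finset.range k, (r : ℚ) / 2 ^ r) ≤ 2 := by
    refine le_trans (hlc_cl2 k) ?_
    have : (0 : ℚ) ≤ 2 * (k + 1) / 2 ^ k := by positivity
    linarith
  have hcast : (2 : ℚ) ^ (3 * k) / 64 ≤ ((Fintype.card ι : ℕ) : ℚ) := by
    rw [hcard]
    push_cast
    rcases k with _ | _ | m
    · omega
    · norm_num
    · rw [show m + 1 + 1 - 1 = m + 1 by omega, show m + 1 + 1 - 2 = m by omega]
      calc (2 : ℚ) ^ (3 * (m + 1 + 1)) / 64 = 2 ^ (3 * m) := by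
            rw [show 3 * (m + 1 + 1) = 3 * m + 6 by ring, pow_add]
            norm_num
        _ ≤ 2 ^ ((m + 1) + (m + m)) := by
            refine pow_le_pow_right₀ (by norm_num) (by omega)
        _ = 2 ^ (m + 1) * (2 ^ m * 2 ^ m) := by
            rw [pow_add, pow_add, pow_add]
  calc ∑ r ∈ Finset.range k,
        ((4 : ℚ) ^ r - 3 ^ r) * (4 : ℚ) ^ ((k : ℤ) - r - 2) * (2 : ℚ) ^ ((k : ℤ) - r - 1)
      ≤ ∑ r ∈ Finset.range k, ((r : ℚ) / 2 ^ r) * ((2 : ℚ) ^ (3 * k) / 128) := hsum1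
    _ = (∑ r ∈ Finset.range k, (r : ℚ) / 2 ^ r) * ((2 : ℚ) ^ (3 * k) / 128) := hsum2
    _ ≤ 2 * ((2 : ℚ) ^ (3 * k) / 128) := by
        refine mul_le_mul_of_nonneg_right hle2 (by positivity)
    _ = (2 : ℚ) ^ (3 * k) / 64 := by ring
    _ ≤ ((Fintype.card ι : ℕ) : ℚ) := hcast
    _ ≤ _ := by exact_mod_cast Nat.cast_le.mpr hfin
end

section
/- Define, for each natural number k ≥ 1, a_k = Σ_{r=1}^{k} (2^k/2^{r+1})·( C(2^{k-r}, 2)·(4^r - 3^r) + 2^{k-r}·C(2^r + 1, 2) ), where C(n,2) denotes the binomial coefficient n choose 2. Then the sequence a_k / 8^k converges to 1/10 as k → ∞. In particular, the lower bound on the rate K/q^3 of the Hermitian lifted code over F_{q^2} with q = 2^k tends to 0.1. -/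
/-!
Divided by `8^k`, the `r`-th summand is `(1/2)^r/4 - (3/8)^r/4 + 2^{-k} ((3/4)^r + (1/2)^r)/4`.
Hence `a_k / 8^k` is a combination of partial sums of geometric series, the last two damped by
`2^{-k}`, and it tends to `(1/4)·1 - (1/4)·(3/5) = 1/10`.
-/

open Filter Topology Finset

theorem tendsto_sum_Icc_one_pow {K : Type*} [NormedField K] [CompleteSpace K] {x : K}
    (hx : ‖x‖ < 1) :
    Tendsto (fun k : ℕ => ∑ r ∈ Icc 1 k, x ^ r) atTop (𝓝 (x / (1 - x))) := by
  have hsum := (hasSum_geometric_of_norm_lt_one hx).tendsto_sum_nat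
  have hx1 : 1 - x ≠ 0 := by rintro h; simp [← sub_eq_zero.mp h] at hx
  have hlim : x / (1 - x) = (1 - x)⁻¹ - 1 := by field_simp; ring
  rw [hlim]
  refine ((tendsto_add_atTop_iff_nat 1).mpr hsum).sub_const 1 |>.congr fun k => ?_
  rw [sum_range_succ', pow_zero, add_sub_cancel_right, ← Ico_add_one_right_eq_Icc,
    sum_Ico_eq_sum_range, add_tsub_cancel_right]
  simp only [add_comm 1]

theorem summand_div_eight_pow {r k : ℕ} (hrk : r ≤ k) :
    (2 : ℝ) ^ k / 2 ^ (r + 1) *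
        ((Nat.choose (2 ^ (k - r)) 2 : ℝ) * ((4 : ℝ) ^ r - 3 ^ r)
          + (2 : ℝ) ^ (k - r) * (Nat.choose (2 ^ r + 1) 2 : ℝ)) / 8 ^ k
      = (1 / 2 : ℝ) ^ r / 4 - (3 / 8 : ℝ) ^ r / 4
          + (1 / 2 : ℝ) ^ k / 4 * ((3 / 4 : ℝ) ^ r + (1 / 2 : ℝ) ^ r) := by
  have hsub : (2 : ℝ) ^ (k - r) = 2 ^ k / 2 ^ r := pow_sub₀ 2 two_ne_zero hrk
  have h4 (n : ℕ) : (4 : ℝ) ^ n = (2 ^ n) ^ 2 := by rw [← pow_mul, mul_comm, pow_mul]; norm_num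
  have h8 (n : ℕ) : (8 : ℝ) ^ n = (2 ^ n) ^ 3 := by rw [← pow_mul, mul_comm, pow_mul]; norm_num
  rw [Nat.cast_choose_two, Nat.cast_choose_two]
  push_cast
  simp only [div_pow, one_pow, hsub, h4, h8]
  field_simp
  ring

/-- With `a_k = Σ_{r=1}^{k} (2^k/2^{r+1})·( C(2^{k-r}, 2)·(4^r - 3^r) + 2^{k-r}·C(2^r + 1, 2) )`,
the sequence `a_k / 8^k` converges to `1/10` as `k → ∞`: the lower bound on the rate of the
Hermitian lifted code tends to `0.1`. -/
theorem hermitian_lifted_code_rate_limit :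
    Filter.Tendsto
      (fun k : ℕ =>
        (∑ r ∈ Finset.Icc 1 k, (2 : ℝ) ^ k / 2 ^ (r + 1) *
            ((Nat.choose (2 ^ (k - r)) 2 : ℝ) * ((4 : ℝ) ^ r - 3 ^ r)
              + (2 : ℝ) ^ (k - r) * (Nat.choose (2 ^ r + 1) 2 : ℝ))) / 8 ^ k)
      Filter.atTop (nhds (1 / 10)) := by
  have half := tendsto_sum_Icc_one_pow (by norm_num : ‖(1 / 2 : ℝ)‖ < 1)
  have three_eighths := tendsto_sum_Icc_one_pow (by norm_num : ‖(3 / 8 : ℝ)‖ < 1)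
  have three_quarters := tendsto_sum_Icc_one_pow (by norm_num : ‖(3 / 4 : ℝ)‖ < 1)
  have half_pow :=
    tendsto_pow_atTop_nhds_zero_of_lt_one (r := (1 / 2 : ℝ)) (by norm_num) (by norm_num)
  have hlim := ((half.div_const 4).sub (three_eighths.div_const 4)).add
    ((half_pow.div_const 4).mul (three_quarters.add half))
  convert hlim using 2 with k
  · rw [sum_div, sum_congr rfl fun r hr => summand_div_eight_pow (mem_Icc.mp hr).2]
    simp only [sum_add_distrib, sum_sub_distrib, sum_div, mul_add, mul_sum]
  · norm_num
end
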